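/- arXiv:math/0012059 — 10 statements merged into one kernel-verified Lean document; each statement's English description precedes it below -/
import Mathlib

section
/- Let Q be an odd positive integer, P ∈ {1,...,Q−1} with gcd(P,Q) = 1, and q = exp(iπP/Q). Let V be a nonzero finite-dimensional complex inner product space and let X, Y, Z be self-adjoint linear endomorphisms of V with Z invertible, satisfying Z X = q⁻² X Z, Z Y = q² Y Z, and q⁻¹ X Y − q Y X = −(1 − Z²)/(q − q⁻¹). Suppose the representation is irreducible, i.e. the only subspaces W ⊆ V with X W ⊆ W, Y W ⊆ W and Z W ⊆ W are {0} and V. Then X = 0, Y = 0, Z = I or Z = −I, and dim V = 1. -/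
/-!
Conjugation by `Z` rescales `X` and `Y` by `q⁻²` and `q²`, which are not real because `Q` is odd
and `Q ∤ P`. So `X` and `Y` map each eigenvector of `Z` (real nonzero eigenvalue `μ`) to an
eigenvector for the non-real eigenvalue `q^{∓2} μ`, i.e. to `0`; since the eigenvectors of the
self-adjoint `Z` span `V`, `X = Y = 0`. The third relation then reads `Z² = 1`, and by
irreducibility an eigenspace of `Z` is all of `V`, so `Z = ±1` and every subspace is invariant,
forcing `dim V = 1`.
-/

theorem sin_two_pi_mul_div_ne_zero_of_odd {P Q : ℕ} (hQ : Odd Q) (hP : ¬ Q ∣ P) :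
    Real.sin (2 * Real.pi * P / Q) ≠ 0 := by
  rw [Ne, Real.sin_eq_zero_iff]
  rintro ⟨n, hn⟩
  have hQ0 : (Q : ℝ) ≠ 0 := by exact_mod_cast hQ.pos.ne'
  have hnQ : n * (Q : ℤ) = (2 * P : ℕ) := by
    have : (n : ℝ) * Q = 2 * P := by
      field_simp at hn
      nlinarith [Real.pi_pos]
    exact_mod_cast this
  have hdvd : Q ∣ 2 * P := Int.natCast_dvd_natCast.mp ⟨n, by rw [← hnQ, mul_comm]⟩
  exact hP (hQ.coprime_two_right.dvd_of_dvd_mul_left hdvd)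

open Module.End

section

variable {V : Type*} [NormedAddCommGroup V] [InnerProductSpace ℂ V] {Z W : V →ₗ[ℂ] V}

theorem LinearMap.IsSymmetric.eigenspace_le_ker_of_comp_eq_smul_comp (hZ : Z.IsSymmetric)
    (hZinj : Function.Injective Z) {c : ℂ} (hc : c.im ≠ 0) (hZW : Z ∘ₗ W = c • (W ∘ₗ Z))
    (μ : ℂ) : eigenspace Z μ ≤ LinearMap.ker W := by
  intro v hv
  rw [mem_eigenspace_iff] at hv
  rw [LinearMap.mem_ker]
  by_contra hWv
  have hv0 : v ≠ 0 := by rintro rfl; simp at hWv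
  have hμ0 : μ ≠ 0 := by rintro rfl; exact hv0 (hZinj (by simpa using hv))
  have hZWv : Z (W v) = (c * μ) • W v := by
    rw [← LinearMap.comp_apply, hZW, LinearMap.smul_apply, LinearMap.comp_apply, hv, map_smul,
      smul_smul]
  have hμ : μ.im = 0 := Complex.conj_eq_iff_im.mp <| hZ.conj_eigenvalue_eq_self <|
    hasEigenvalue_of_hasEigenvector ⟨mem_eigenspace_iff.mpr hv, hv0⟩
  have hcμ : (c * μ).im = 0 := Complex.conj_eq_iff_im.mp <| hZ.conj_eigenvalue_eq_self <|
    hasEigenvalue_of_hasEigenvector ⟨mem_eigenspace_iff.mpr hZWv, hWv⟩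
  have hμre : μ.re ≠ 0 := fun h => hμ0 (Complex.ext h hμ)
  rw [Complex.mul_im, hμ, mul_zero, zero_add] at hcμ
  exact mul_ne_zero hc hμre hcμ

theorem LinearMap.IsSymmetric.eq_zero_of_comp_eq_smul_comp [FiniteDimensional ℂ V]
    (hZ : Z.IsSymmetric) (hZinj : Function.Injective Z) {c : ℂ} (hc : c.im ≠ 0)
    (hZW : Z ∘ₗ W = c • (W ∘ₗ Z)) : W = 0 := by
  have hspan : (⨆ μ, eigenspace Z μ) = ⊤ :=
    Submodule.orthogonal_eq_bot_iff.mp hZ.orthogonalComplement_iSup_eigenspaces_eq_bot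
  rw [← LinearMap.ker_eq_top, eq_top_iff, ← hspan]
  exact iSup_le (hZ.eigenspace_le_ker_of_comp_eq_smul_comp hZinj hc hZW)

end

theorem Module.End.exists_eq_smul_id_of_forall_invariant {K V : Type*} [Field K] [IsAlgClosed K]
    [AddCommGroup V] [Module K V] [FiniteDimensional K V] [Nontrivial V] (f : End K V)
    (hf : ∀ W : Submodule K V, (∀ v ∈ W, f v ∈ W) → W = ⊥ ∨ W = ⊤) :
    ∃ μ : K, f = μ • LinearMap.id := by
  obtain ⟨μ, hμ⟩ := f.exists_eigenvalue
  refine ⟨μ, LinearMap.ext fun v => ?_⟩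
  have hinv : ∀ v ∈ eigenspace f μ, f v ∈ eigenspace f μ := fun v hv => by
    rw [mem_eigenspace_iff] at hv ⊢
    rw [hv, map_smul, hv]
  have htop := (hf _ hinv).resolve_left hμ
  exact mem_eigenspace_iff.mp (htop ▸ Submodule.mem_top : v ∈ eigenspace f μ)

theorem Module.finrank_eq_one_of_forall_eq_bot_or_eq_top {K V : Type*} [Field K] [AddCommGroup V]
    [Module K V] [Nontrivial V] (h : ∀ W : Submodule K V, W = ⊥ ∨ W = ⊤) : finrank K V = 1 :=
  isSimpleModule_iff_finrank_eq_one.mp <| (isSimpleModule_iff K V).mpr ⟨h⟩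

theorem stmt_5_general (Q P : ℕ) (hQodd : Odd Q)
    (hP1 : 1 ≤ P) (hPQ : P ≤ Q - 1)
    (q : ℂ) (hq : q = Complex.exp (↑Real.pi * Complex.I * (P : ℂ) / (Q : ℂ)))
    {V : Type*} [NormedAddCommGroup V] [InnerProductSpace ℂ V]
    [FiniteDimensional ℂ V] [Nontrivial V]
    (X Y Z : V →ₗ[ℂ] V)
    (hZsa : LinearMap.IsSymmetric Z)
    (hZinv : Function.Bijective Z)
    (hZX : Z ∘ₗ X = (q⁻¹ ^ 2) • (X ∘ₗ Z))
    (hZY : Z ∘ₗ Y = (q ^ 2) • (Y ∘ₗ Z))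
    (hXY : q⁻¹ • (X ∘ₗ Y) - q • (Y ∘ₗ X)
        = -((q - q⁻¹)⁻¹ • ((LinearMap.id : V →ₗ[ℂ] V) - Z ∘ₗ Z)))
    (hirr : ∀ W : Submodule ℂ V, (∀ v ∈ W, X v ∈ W) → (∀ v ∈ W, Y v ∈ W) →
      (∀ v ∈ W, Z v ∈ W) → W = ⊥ ∨ W = ⊤) :
    X = 0 ∧ Y = 0 ∧ (Z = (LinearMap.id : V →ₗ[ℂ] V) ∨ Z = -(LinearMap.id : V →ₗ[ℂ] V)) ∧
      Module.finrank ℂ V = 1 := by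
  set θ : ℝ := 2 * Real.pi * P / Q
  have hsin : Real.sin θ ≠ 0 :=
    sin_two_pi_mul_div_ne_zero_of_odd hQodd (Nat.not_dvd_of_pos_of_lt hP1 (by omega))
  have hq2 : q ^ 2 = Complex.exp (θ * Complex.I) := by
    rw [hq, ← Complex.exp_nat_mul]
    simp only [θ]
    push_cast
    ring_nf
  have hq2im : (q ^ 2).im ≠ 0 := by rwa [hq2, Complex.exp_ofReal_mul_I_im]
  have hqinv2im : (q⁻¹ ^ 2).im ≠ 0 := by
    rwa [inv_pow, hq2, ← Complex.exp_neg, ← neg_mul, ← Complex.ofReal_neg,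
      Complex.exp_ofReal_mul_I_im, Real.sin_neg, neg_ne_zero]
  have hX : X = 0 := hZsa.eq_zero_of_comp_eq_smul_comp hZinv.injective hqinv2im hZX
  have hY : Y = 0 := hZsa.eq_zero_of_comp_eq_smul_comp hZinv.injective hq2im hZY
  have hqq : q - q⁻¹ ≠ 0 := by
    have hq0 : q ≠ 0 := by rw [hq]; exact Complex.exp_ne_zero _
    refine fun h => hq2im ?_
    rw [sq]
    nth_rewrite 2 [sub_eq_zero.mp h]
    simp [mul_inv_cancel₀ hq0]
  have hZZ : Z ∘ₗ Z = LinearMap.id := by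
    simpa [hX, hY, hqq, sub_eq_zero, eq_comm] using hXY
  obtain ⟨μ, rfl⟩ := Module.End.exists_eq_smul_id_of_forall_invariant Z fun W hW =>
    hirr W (by simp [hX]) (by simp [hY]) hW
  have hμ : μ * μ = 1 := by
    obtain ⟨v, hv⟩ := exists_ne (0 : V)
    exact smul_left_injective ℂ hv (by simpa [smul_smul] using LinearMap.congr_fun hZZ v)
  refine ⟨hX, hY, ?_, Module.finrank_eq_one_of_forall_eq_bot_or_eq_top fun W =>
    hirr W (by simp [hX]) (by simp [hY]) fun v hv => W.smul_mem μ hv⟩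
  rcases mul_self_eq_one_iff.mp hμ with rfl | rfl <;> simp

/-- For `q = exp(iπP/Q)` a root of unity as above, any irreducible
`*`-representation of the algebra `U` on a nonzero finite-dimensional complex inner product
space (self-adjoint `X, Y, Z` with `Z` invertible satisfying the defining relations) is trivial:
`X = 0`, `Y = 0`, `Z = ±I` and `dim V = 1`. -/
theorem stmt_5 (Q P : ℕ) (hQodd : Odd Q) (hQpos : 0 < Q)
    (hP1 : 1 ≤ P) (hPQ : P ≤ Q - 1) (hcop : Nat.Coprime P Q)
    (q : ℂ) (hq : q = Complex.exp (↑Real.pi * Complex.I * (P : ℂ) / (Q : ℂ)))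
    {V : Type*} [NormedAddCommGroup V] [InnerProductSpace ℂ V]
    [FiniteDimensional ℂ V] [Nontrivial V]
    (X Y Z : V →ₗ[ℂ] V)
    (hXsa : LinearMap.IsSymmetric X) (hYsa : LinearMap.IsSymmetric Y)
    (hZsa : LinearMap.IsSymmetric Z)
    (hZinv : Function.Bijective Z)
    (hZX : Z ∘ₗ X = (q⁻¹ ^ 2) • (X ∘ₗ Z))
    (hZY : Z ∘ₗ Y = (q ^ 2) • (Y ∘ₗ Z))
    (hXY : q⁻¹ • (X ∘ₗ Y) - q • (Y ∘ₗ X)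
        = -((q - q⁻¹)⁻¹ • ((LinearMap.id : V →ₗ[ℂ] V) - Z ∘ₗ Z)))
    (hirr : ∀ W : Submodule ℂ V, (∀ v ∈ W, X v ∈ W) → (∀ v ∈ W, Y v ∈ W) →
      (∀ v ∈ W, Z v ∈ W) → W = ⊥ ∨ W = ⊤) :
    X = 0 ∧ Y = 0 ∧ (Z = (LinearMap.id : V →ₗ[ℂ] V) ∨ Z = -(LinearMap.id : V →ₗ[ℂ] V)) ∧
      Module.finrank ℂ V = 1 :=
  stmt_5_general Q P hQodd hP1 hPQ q hq X Y Z hZsa hZinv hZX hZY hXY hirr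
end

section
/- Let Q be an odd positive integer, P ∈ {1,...,Q−1} with gcd(P,Q) = 1, q = exp(iπP/Q), fix n ∈ {1,...,Q} and set d = Q+1−n. Define d×d complex matrices (indices 0,...,d−1): X̃ with only nonzero entries X̃_{j,j−1} = x_j = q^{−n−2j+1}[n+j−1]_q for j = 1,...,d−1; Ỹ with only nonzero entries Ỹ_{j−1,j} = y_j = [j]_q for j = 1,...,d−1; and Z̃ diagonal with Z̃_{jj} = z_j = q^{−n−2j} for j = 0,...,d−1. Then Z̃ X̃ = q⁻² X̃ Z̃, Z̃ Ỹ = q² Ỹ Z̃, and q⁻¹ X̃ Ỹ − q Ỹ X̃ = −(1 − Z̃²)/(q − q⁻¹). -/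
/-- The q-number `[x]_q = (q^x − q^(−x))/(q − q⁻¹)`. -/
noncomputable def qnum (q : ℂ) (x : ℤ) : ℂ := (q ^ x - q ^ (-x)) / (q - q⁻¹)

/-!
The Z̃-relations hold entry by entry because the entries of Z̃ drop by the factor `q⁻²` from one
index to the next. For the third relation both `X̃ Ỹ` and `Ỹ X̃` are diagonal, and on the diagonal
it reduces to the q-number identity `[a+1][b+1] − [a][b] = [a+b+1]`. The truncation to size
`d = Q + 1 − n` is harmless because the entry `x_d` that `Ỹ X̃` would need in its last diagonal
entry contains the factor `[Q]_q`, which vanishes since `q^(2Q) = 1`.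
-/

section Bidiagonal

open Matrix

variable {R : Type*} (d : ℕ)

def subdiagonal [Zero R] (x : ℕ → R) : Matrix (Fin d) (Fin d) R :=
  of fun i j => if (i : ℕ) = (j : ℕ) + 1 then x i else 0

def superdiagonal [Zero R] (y : ℕ → R) : Matrix (Fin d) (Fin d) R :=
  of fun i j => if (j : ℕ) = (i : ℕ) + 1 then y j else 0

variable {d} [CommSemiring R] {x y z : ℕ → R} {c : R}

theorem diagonal_mul_subdiagonal (hz : ∀ k, z (k + 1) = c * z k) :
    diagonal (fun i : Fin d => z i) * subdiagonal d x
      = c • (subdiagonal d x * diagonal fun i : Fin d => z i) := by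
  ext i j
  simp only [diagonal_mul, mul_diagonal, Matrix.smul_apply, subdiagonal, of_apply, smul_eq_mul]
  split_ifs with h
  · rw [h, hz]; ring
  · simp

theorem diagonal_mul_superdiagonal (hz : ∀ k, z k = c * z (k + 1)) :
    diagonal (fun i : Fin d => z i) * superdiagonal d y
      = c • (superdiagonal d y * diagonal fun i : Fin d => z i) := by
  ext i j
  simp only [diagonal_mul, mul_diagonal, Matrix.smul_apply, superdiagonal, of_apply, smul_eq_mul]
  split_ifs with h
  · rw [h, hz]; ring
  · simp

theorem subdiagonal_mul_superdiagonal (hy : y 0 = 0) :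
    subdiagonal d x * superdiagonal d y = diagonal fun i : Fin d => x i * y i := by
  ext ⟨i, hi⟩ j
  simp only [mul_apply, subdiagonal, superdiagonal, of_apply, diagonal_apply]
  cases i with
  | zero => simp [hy]
  | succ m =>
    rw [Finset.sum_eq_single ⟨m, by omega⟩] <;> simp +contextual [Fin.ext_iff, eq_comm]

theorem superdiagonal_mul_subdiagonal (hx : x d = 0) :
    superdiagonal d y * subdiagonal d x = diagonal fun i : Fin d => y (i + 1) * x (i + 1) := by
  ext i j
  simp only [mul_apply, subdiagonal, superdiagonal, of_apply, diagonal_apply]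
  by_cases hi : (i : ℕ) + 1 < d
  · rw [Finset.sum_eq_single ⟨i + 1, hi⟩] <;> simp +contextual [Fin.ext_iff, eq_comm]
  · have hd : (i : ℕ) + 1 = d := by omega
    rw [Finset.sum_eq_zero fun k _ => by simp [show (k : ℕ) ≠ i + 1 by omega]]
    simp [hd, hx]

end Bidiagonal

theorem qnum_eq_zero_of_zpow_eq_one {q : ℂ} (hq : q ≠ 0) {m : ℤ} (h : q ^ (2 * m) = 1) :
    qnum q m = 0 := by
  rw [two_mul, zpow_add₀ hq] at h
  rw [qnum, zpow_neg, inv_eq_of_mul_eq_one_left h, sub_self, zero_div]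

theorem qnum_add_one_mul_add_one_sub_mul (q : ℂ) (a b : ℤ) :
    qnum q (a + 1) * qnum q (b + 1) - qnum q a * qnum q b = qnum q (a + b + 1) := by
  rcases eq_or_ne (q - q⁻¹) 0 with h | h
  · simp [qnum, h]
  have hq : q ≠ 0 := by rintro rfl; simp at h
  rw [qnum, qnum, qnum, qnum, qnum, div_mul_div_comm, div_mul_div_comm, div_sub_div_same,
    div_eq_div_iff (mul_ne_zero h h) h]
  simp only [zpow_add₀ hq, zpow_neg, zpow_one]
  field_simp
  ring

theorem inv_sub_inv_mul_one_sub_zpow_sq (q : ℂ) (m : ℤ) :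
    (q - q⁻¹)⁻¹ * (1 - (q ^ (-m)) ^ 2) = q ^ (-m) * qnum q m := by
  rcases eq_or_ne q 0 with rfl | hq
  · simp [qnum]
  rw [qnum, zpow_neg]
  field_simp

theorem exp_pi_mul_I_div_zpow_two_mul (P Q : ℕ) :
    Complex.exp (↑Real.pi * Complex.I * (P : ℂ) / (Q : ℂ)) ^ (2 * (Q : ℤ)) = 1 := by
  rcases eq_or_ne Q 0 with rfl | hQ
  · simp
  rw [show 2 * (Q : ℤ) = ((2 * Q : ℕ) : ℤ) by push_cast; ring, zpow_natCast,
    ← Complex.exp_nat_mul, ← Complex.exp_nat_mul_two_pi_mul_I P]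
  congr 1
  push_cast
  field_simp

section Representation

variable (q : ℂ) (n d : ℕ)

noncomputable def xEntry (j : ℕ) : ℂ :=
  q ^ (-(n : ℤ) - 2 * (j : ℤ) + 1) * qnum q ((n : ℤ) + (j : ℤ) - 1)

noncomputable def zEntry (j : ℕ) : ℂ := q ^ (-(n : ℤ) - 2 * (j : ℤ))

noncomputable def tildeX : Matrix (Fin d) (Fin d) ℂ := subdiagonal d (xEntry q n)

noncomputable def tildeY : Matrix (Fin d) (Fin d) ℂ := superdiagonal d fun j => qnum q j

noncomputable def tildeZ : Matrix (Fin d) (Fin d) ℂ := Matrix.diagonal fun i => zEntry q n i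

variable {q n d}

theorem zEntry_succ (hq : q ≠ 0) (k : ℕ) : zEntry q n (k + 1) = q⁻¹ ^ 2 * zEntry q n k := by
  rw [zEntry, zEntry, show -(n : ℤ) - 2 * ↑(k + 1) = -2 + (-n - 2 * k) by push_cast; ring,
    zpow_add₀ hq, zpow_neg, inv_pow, zpow_two, sq]

theorem inv_mul_xEntry_mul_qnum_sub (i : ℕ) :
    q⁻¹ * (xEntry q n i * qnum q i) - q * (qnum q ↑(i + 1) * xEntry q n (i + 1))
      = -((q - q⁻¹)⁻¹ * (1 - zEntry q n i ^ 2)) := by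
  rcases eq_or_ne q 0 with rfl | hq
  · simp [xEntry, qnum]
  have h := qnum_add_one_mul_add_one_sub_mul q (n + i - 1) i
  rw [sub_add_cancel, show (n : ℤ) + i - 1 + i + 1 = n + 2 * i by ring] at h
  have hexp : -(n : ℤ) - 2 * i = -(n + 2 * i) := by ring
  have hleft : q⁻¹ * q ^ (-(n : ℤ) - 2 * i + 1) = q ^ (-(n + 2 * i : ℤ)) := by
    rw [zpow_add_one₀ hq, hexp]; field_simp
  have hright : q * q ^ (-(n : ℤ) - 2 * (i + 1) + 1) = q ^ (-(n + 2 * i : ℤ)) := by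
    rw [← zpow_one_add₀ hq]; ring_nf
  rw [zEntry, hexp, inv_sub_inv_mul_one_sub_zpow_sq, xEntry, xEntry, ← h]
  push_cast
  rw [show (n : ℤ) + (i + 1) - 1 = n + i by ring]
  linear_combination (qnum q (n + i - 1) * qnum q i) * hleft
    - (qnum q (i + 1) * qnum q (n + i)) * hright

theorem tildeZ_mul_tildeX (hq : q ≠ 0) :
    tildeZ q n d * tildeX q n d = q⁻¹ ^ 2 • (tildeX q n d * tildeZ q n d) :=
  diagonal_mul_subdiagonal (zEntry_succ hq)

theorem tildeZ_mul_tildeY (hq : q ≠ 0) :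
    tildeZ q n d * tildeY q d = q ^ 2 • (tildeY q d * tildeZ q n d) :=
  diagonal_mul_superdiagonal fun k => by
    rw [zEntry_succ hq, ← mul_assoc, ← mul_pow, mul_inv_cancel₀ hq, one_pow, one_mul]

theorem inv_smul_tildeX_mul_tildeY_sub (hx : xEntry q n d = 0) :
    q⁻¹ • (tildeX q n d * tildeY q d) - q • (tildeY q d * tildeX q n d)
      = -((q - q⁻¹)⁻¹ • (1 - tildeZ q n d ^ 2)) := by
  rw [tildeX, tildeY, tildeZ, subdiagonal_mul_superdiagonal (by simp [qnum]),
    superdiagonal_mul_subdiagonal hx, Matrix.diagonal_pow, ← Matrix.diagonal_one,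
    Matrix.diagonal_sub, ← Matrix.diagonal_smul, ← Matrix.diagonal_smul, ← Matrix.diagonal_smul,
    Matrix.diagonal_sub, Matrix.diagonal_neg]
  congr 1
  funext i
  exact inv_mul_xEntry_mul_qnum_sub i

end Representation

theorem stmt_6_general (Q P : ℕ)
    (q : ℂ) (hq : q = Complex.exp (↑Real.pi * Complex.I * (P : ℂ) / (Q : ℂ)))
    (n : ℕ) (hnQ : n ≤ Q) (d : ℕ) (hd : d = Q + 1 - n) :
    let Xm : Matrix (Fin d) (Fin d) ℂ := Matrix.of fun i j =>
      if (i : ℕ) = (j : ℕ) + 1 then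
        q ^ (-(n : ℤ) - 2 * (i : ℤ) + 1) * qnum q ((n : ℤ) + (i : ℤ) - 1) else 0
    let Ym : Matrix (Fin d) (Fin d) ℂ := Matrix.of fun i j =>
      if (j : ℕ) = (i : ℕ) + 1 then qnum q (j : ℤ) else 0
    let Zm : Matrix (Fin d) (Fin d) ℂ := Matrix.of fun i j =>
      if i = j then q ^ (-(n : ℤ) - 2 * (i : ℤ)) else 0
    Zm * Xm = (q⁻¹ ^ 2) • (Xm * Zm) ∧
    Zm * Ym = (q ^ 2) • (Ym * Zm) ∧
    q⁻¹ • (Xm * Ym) - q • (Ym * Xm) = -((q - q⁻¹)⁻¹ • ((1 : Matrix (Fin d) (Fin d) ℂ) - Zm ^ 2)) := by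
  intro Xm Ym Zm
  have hq0 : q ≠ 0 := hq ▸ Complex.exp_ne_zero _
  have hx : xEntry q n d = 0 := by
    rw [xEntry, show (n : ℤ) + d - 1 = Q by omega,
      qnum_eq_zero_of_zpow_eq_one hq0 (hq ▸ exp_pi_mul_I_div_zpow_two_mul P Q), mul_zero]
  exact ⟨tildeZ_mul_tildeX hq0, tildeZ_mul_tildeY hq0, inv_smul_tildeX_mul_tildeY_sub hx⟩

/-- For `q = exp(iπP/Q)`, `n ∈ {1,...,Q}`, `d = Q+1−n`, the `d×d` matrices
`X̃` (subdiagonal entries `x_j = q^(−n−2j+1)[n+j−1]_q`), `Ỹ` (superdiagonal entries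
`y_j = [j]_q`) and `Z̃` (diagonal entries `z_j = q^(−n−2j)`) satisfy the defining relations
`Z̃ X̃ = q⁻² X̃ Z̃`, `Z̃ Ỹ = q² Ỹ Z̃`, `q⁻¹ X̃ Ỹ − q Ỹ X̃ = −(1 − Z̃²)/(q − q⁻¹)`. -/
theorem stmt_6 (Q P : ℕ) (hQodd : Odd Q) (hQpos : 0 < Q)
    (hP1 : 1 ≤ P) (hPQ : P ≤ Q - 1) (hcop : Nat.Coprime P Q)
    (q : ℂ) (hq : q = Complex.exp (↑Real.pi * Complex.I * (P : ℂ) / (Q : ℂ)))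
    (n : ℕ) (hn1 : 1 ≤ n) (hnQ : n ≤ Q) (d : ℕ) (hd : d = Q + 1 - n) :
    let Xm : Matrix (Fin d) (Fin d) ℂ := Matrix.of fun i j =>
      if (i : ℕ) = (j : ℕ) + 1 then
        q ^ (-(n : ℤ) - 2 * (i : ℤ) + 1) * qnum q ((n : ℤ) + (i : ℤ) - 1) else 0
    let Ym : Matrix (Fin d) (Fin d) ℂ := Matrix.of fun i j =>
      if (j : ℕ) = (i : ℕ) + 1 then qnum q (j : ℤ) else 0
    let Zm : Matrix (Fin d) (Fin d) ℂ := Matrix.of fun i j =>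
      if i = j then q ^ (-(n : ℤ) - 2 * (i : ℤ)) else 0
    Zm * Xm = (q⁻¹ ^ 2) • (Xm * Zm) ∧
    Zm * Ym = (q ^ 2) • (Ym * Zm) ∧
    q⁻¹ • (Xm * Ym) - q • (Ym * Xm) = -((q - q⁻¹)⁻¹ • ((1 : Matrix (Fin d) (Fin d) ℂ) - Zm ^ 2)) :=
  stmt_6_general Q P q hq n hnQ d hd
end

section
/- Let Q be an odd positive integer, P ∈ {1,...,Q−1} with gcd(P,Q) = 1, q = exp(iπP/Q), fix n ∈ {1,...,Q} and set d = Q+1−n. Let X̃, Ỹ, Z̃ be the d×d matrices with only nonzero entries X̃_{j,j−1} = q^{−n−2j+1}[n+j−1]_q and Ỹ_{j−1,j} = [j]_q for j = 1,...,d−1, and Z̃_{jj} = q^{−n−2j} for j = 0,...,d−1. Then the only linear subspaces W ⊆ ℂ^d satisfying X̃ W ⊆ W, Ỹ W ⊆ W and Z̃ W ⊆ W are {0} and ℂ^d; i.e., the representation ρ̃ is irreducible. -/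
theorem zpow_sub_zpow_neg_ne_zero {q : ℂ} {N : ℕ} (hq : IsPrimitiveRoot (q ^ 2) N) {j : ℤ}
    (hj0 : 0 < j) (hjN : j < N) : q ^ j - q ^ (-j) ≠ 0 := by
  have hN : N ≠ 0 := by omega
  have hq0 : q ≠ 0 := pow_ne_zero_iff two_ne_zero |>.1 (hq.ne_zero hN)
  intro h
  have hsq : (q ^ 2) ^ j = 1 := by
    rw [← zpow_natCast, ← zpow_mul, Nat.cast_ofNat, two_mul, zpow_add₀ hq0]
    nth_rw 2 [sub_eq_zero.1 h]
    rw [← zpow_add₀ hq0, add_neg_cancel, zpow_zero]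
  have := Int.le_of_dvd hj0 ((hq.zpow_eq_one_iff_dvd j).1 hsq)
  omega

theorem qnum_ne_zero {q : ℂ} {N : ℕ} (hq : IsPrimitiveRoot (q ^ 2) N) {j : ℤ}
    (hj0 : 0 < j) (hjN : j < N) : qnum q j ≠ 0 := by
  have hden := zpow_sub_zpow_neg_ne_zero hq one_pos (by omega : (1 : ℤ) < N)
  rw [zpow_one, zpow_neg_one] at hden
  exact div_ne_zero (zpow_sub_zpow_neg_ne_zero hq hj0 hjN) hden

theorem isPrimitiveRoot_exp_sq {P Q : ℕ} (hQ : Q ≠ 0) (hcop : P.Coprime Q) :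
    IsPrimitiveRoot (Complex.exp (Real.pi * Complex.I * P / Q) ^ 2) Q := by
  rw [← Complex.exp_nat_mul]
  convert Complex.isPrimitiveRoot_exp_of_coprime P Q hQ hcop using 2
  push_cast
  ring

namespace Matrix

variable {K : Type*} [Field K] {d : ℕ}

def subdiag (b : ℕ → K) : Matrix (Fin d) (Fin d) K :=
  of fun i j => if (i : ℕ) = j + 1 then b i else 0

def superdiag (c : ℕ → K) : Matrix (Fin d) (Fin d) K :=
  of fun i j => if (j : ℕ) = i + 1 then c j else 0

theorem subdiag_mulVec_single_one (b : ℕ → K) {i j : Fin d} (hij : (j : ℕ) = i + 1) :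
    subdiag b *ᵥ Pi.single i 1 = Pi.single j (b j) := by
  ext k
  rw [mulVec_single_one, col_apply, subdiag, of_apply]
  by_cases hk : k = j
  · subst hk; simp [hij]
  · rw [Pi.single_eq_of_ne hk, if_neg (fun h => hk (Fin.ext (h.trans hij.symm)))]

theorem superdiag_mulVec_apply_of_val_eq (c : ℕ → K) (v : Fin d → K) {i j : Fin d}
    (hij : (j : ℕ) = i + 1) : (superdiag c *ᵥ v) i = c j * v j := by
  rw [mulVec, dotProduct, Fintype.sum_eq_single j]
  · simp [superdiag, hij]
  · intro k hk
    have hk' : (k : ℕ) ≠ i + 1 := fun h => hk (Fin.ext (h.trans hij.symm))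
    simp [superdiag, hk']

theorem superdiag_mulVec_apply_eq_zero (c : ℕ → K) {v : Fin d → K} {i : Fin d}
    (hv : ∀ j : Fin d, (j : ℕ) = i + 1 → v j = 0) : (superdiag c *ᵥ v) i = 0 := by
  refine Fintype.sum_eq_zero (fun j => superdiag c i j * v j) fun j => ?_
  by_cases hj : (j : ℕ) = i + 1
  · rw [hv j hj, mul_zero]
  · simp [superdiag, hj]

variable {W : Submodule K (Fin (d + 1) → K)}

theorem single_zero_mem_of_superdiag_invariant {c : ℕ → K}
    (hc : ∀ j, 0 < j → j < d + 1 → c j ≠ 0) (hW : ∀ v ∈ W, superdiag c *ᵥ v ∈ W)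
    {v : Fin (d + 1) → K} (hv : v ∈ W) (hv0 : v ≠ 0) : Pi.single 0 1 ∈ W := by
  suffices ∀ m : ℕ, ∀ v ∈ W, (∀ j : Fin (d + 1), m < j → v j = 0) → v ≠ 0 →
      Pi.single 0 1 ∈ W from
    this d v hv (fun j hj => absurd j.isLt (by omega)) hv0
  intro m
  induction m with
  | zero =>
    intro v hv hsupp hv0
    obtain ⟨a, rfl⟩ : ∃ a : K, v = a • Pi.single 0 1 := by
      refine ⟨v 0, funext fun j => ?_⟩
      by_cases hj : j = 0
      · simp [hj]
      · simp [Pi.single_eq_of_ne hj, hsupp j (Fin.pos_iff_ne_zero.2 hj)]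
    have ha : a ≠ 0 := by
      rintro rfl
      exact hv0 (zero_smul _ _)
    simpa [smul_smul, inv_mul_cancel₀ ha] using W.smul_mem a⁻¹ hv
  | succ m ih =>
    intro v hv hsupp hv0
    by_cases hm : ∀ j : Fin (d + 1), m < j → v j = 0
    · exact ih v hv hm hv0
    push Not at hm
    obtain ⟨j, hmj, hvj⟩ := hm
    have hj : (j : ℕ) = m + 1 := by
      by_contra
      exact hvj (hsupp j (by omega))
    refine ih _ (hW v hv)
      (fun i hi => superdiag_mulVec_apply_eq_zero c fun k hk => hsupp k (by omega)) fun h0 => ?_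
    have := congrFun h0 ⟨m, by omega⟩
    rw [superdiag_mulVec_apply_of_val_eq c v hj, Pi.zero_apply] at this
    exact mul_ne_zero (hc j (by omega) j.isLt) hvj this

theorem eq_top_of_single_zero_mem {b : ℕ → K} (hb : ∀ j, 0 < j → j < d + 1 → b j ≠ 0)
    (hW : ∀ v ∈ W, subdiag b *ᵥ v ∈ W) (h0 : Pi.single 0 1 ∈ W) : W = ⊤ := by
  have hsingle : ∀ i, Pi.single i (1 : K) ∈ W := by
    refine Fin.induction h0 fun i hi => ?_
    have hbi := hb i.succ i.succ_pos i.succ.isLt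
    have := W.smul_mem (b i.succ)⁻¹ (hW _ hi)
    rwa [subdiag_mulVec_single_one b (j := i.succ) (by simp), ← Pi.single_smul', smul_eq_mul,
      inv_mul_cancel₀ hbi] at this
  rw [eq_top_iff, ← (Pi.basisFun K (Fin (d + 1))).span_eq, Submodule.span_le]
  rintro _ ⟨i, rfl⟩
  simpa using hsingle i

theorem eq_bot_or_eq_top_of_subdiag_superdiag_invariant {d : ℕ} {b c : ℕ → K}
    (hb : ∀ j, 0 < j → j < d → b j ≠ 0) (hc : ∀ j, 0 < j → j < d → c j ≠ 0)
    (W : Submodule K (Fin d → K)) (hX : ∀ v ∈ W, subdiag b *ᵥ v ∈ W)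
    (hY : ∀ v ∈ W, superdiag c *ᵥ v ∈ W) : W = ⊥ ∨ W = ⊤ := by
  refine or_iff_not_imp_left.2 fun hW => ?_
  obtain ⟨v, hv, hv0⟩ := W.ne_bot_iff.1 hW
  cases d with
  | zero => exact absurd (Subsingleton.elim v 0) hv0
  | succ d =>
    exact eq_top_of_single_zero_mem hb hX (single_zero_mem_of_superdiag_invariant hc hY hv hv0)

end Matrix

theorem stmt_8_general (Q P : ℕ) (hcop : Nat.Coprime P Q)
    (q : ℂ) (hq : q = Complex.exp (↑Real.pi * Complex.I * (P : ℂ) / (Q : ℂ)))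
    (n : ℕ) (hn1 : 1 ≤ n) (d : ℕ) (hd : d = Q + 1 - n) :
    let Xm : Matrix (Fin d) (Fin d) ℂ := Matrix.of fun i j =>
      if (i : ℕ) = (j : ℕ) + 1 then
        q ^ (-(n : ℤ) - 2 * (i : ℤ) + 1) * qnum q ((n : ℤ) + (i : ℤ) - 1) else 0
    let Ym : Matrix (Fin d) (Fin d) ℂ := Matrix.of fun i j =>
      if (j : ℕ) = (i : ℕ) + 1 then qnum q (j : ℤ) else 0
    let Zm : Matrix (Fin d) (Fin d) ℂ := Matrix.of fun i j =>
      if i = j then q ^ (-(n : ℤ) - 2 * (i : ℤ)) else 0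
    ∀ W : Submodule ℂ (Fin d → ℂ),
      (∀ v ∈ W, Xm.mulVec v ∈ W) → (∀ v ∈ W, Ym.mulVec v ∈ W) →
      (∀ v ∈ W, Zm.mulVec v ∈ W) → W = ⊥ ∨ W = ⊤ := by
  intro Xm Ym Zm W hX hY _
  have hqnum (j : ℕ) (hj0 : 0 < j) (hjQ : j < Q) : qnum q j ≠ 0 :=
    qnum_ne_zero (hq ▸ isPrimitiveRoot_exp_sq (by omega) hcop) (by omega) (by omega)
  refine Matrix.eq_bot_or_eq_top_of_subdiag_superdiag_invariant
    (b := fun i => q ^ (-(n : ℤ) - 2 * (i : ℤ) + 1) * qnum q ((n : ℤ) + (i : ℤ) - 1))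
    (c := fun j => qnum q j) (fun j hj0 hjd => ?_) (fun j hj0 hjd => hqnum j hj0 (by omega))
    W hX hY
  have hnj : (n : ℤ) + j - 1 = ((n + j - 1 : ℕ) : ℤ) := by omega
  exact mul_ne_zero (zpow_ne_zero _ (hq ▸ Complex.exp_ne_zero _))
    (hnj ▸ hqnum _ (by omega) (by omega))

/-- For `q = exp(iπP/Q)`, `n ∈ {1,...,Q}`, `d = Q+1−n`, the representation `ρ̃`
given by the matrices `X̃, Ỹ, Z̃` on `ℂ^d` is irreducible: the only subspaces invariant under
all three matrices are `{0}` and `ℂ^d`. -/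
theorem stmt_8 (Q P : ℕ) (hQodd : Odd Q) (hQpos : 0 < Q)
    (hP1 : 1 ≤ P) (hPQ : P ≤ Q - 1) (hcop : Nat.Coprime P Q)
    (q : ℂ) (hq : q = Complex.exp (↑Real.pi * Complex.I * (P : ℂ) / (Q : ℂ)))
    (n : ℕ) (hn1 : 1 ≤ n) (hnQ : n ≤ Q) (d : ℕ) (hd : d = Q + 1 - n) :
    let Xm : Matrix (Fin d) (Fin d) ℂ := Matrix.of fun i j =>
      if (i : ℕ) = (j : ℕ) + 1 then
        q ^ (-(n : ℤ) - 2 * (i : ℤ) + 1) * qnum q ((n : ℤ) + (i : ℤ) - 1) else 0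
    let Ym : Matrix (Fin d) (Fin d) ℂ := Matrix.of fun i j =>
      if (j : ℕ) = (i : ℕ) + 1 then qnum q (j : ℤ) else 0
    let Zm : Matrix (Fin d) (Fin d) ℂ := Matrix.of fun i j =>
      if i = j then q ^ (-(n : ℤ) - 2 * (i : ℤ)) else 0
    ∀ W : Submodule ℂ (Fin d → ℂ),
      (∀ v ∈ W, Xm.mulVec v ∈ W) → (∀ v ∈ W, Ym.mulVec v ∈ W) →
      (∀ v ∈ W, Zm.mulVec v ∈ W) → W = ⊥ ∨ W = ⊤ :=
  stmt_8_general Q P hcop q hq n hn1 d hd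
end

section
/- Let q ∈ ℂ with q ≠ 0 and q² ≠ 1, and let n ∈ ℤ. On the vector space of functions f : ℂ∖{0} → ℂ define linear operators X, Y, Z by (X f)(w) = −i q⁻¹ w (q^n f(w) − q^{−n} f(q⁻² w))/(q − q⁻¹), (Y f)(w) = i q^{−n+1} (f(w) − f(q⁻² w))/((q − q⁻¹) w), (Z f)(w) = q^{−n} f(q⁻² w). Then Z X = q⁻² X Z, Z Y = q² Y Z, and q⁻¹ X Y − q Y X = −(1 − Z²)/(q − q⁻¹) as operators, i.e. this action makes the function space a module over the algebra with generators X, Y, Z and these defining relations. -/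
/-- The point `q⁻² w` of the punctured complex plane. -/
noncomputable def shiftPt (q : ℂ) (hq : q ≠ 0) (w : {z : ℂ // z ≠ 0}) : {z : ℂ // z ≠ 0} :=
  ⟨q ^ (-2 : ℤ) * (w : ℂ), mul_ne_zero (zpow_ne_zero _ hq) w.2⟩

/-- `(X f)(w) = −i q⁻¹ w (qⁿ f(w) − q⁻ⁿ f(q⁻² w))/(q − q⁻¹)`. -/
noncomputable def Xop (q : ℂ) (hq : q ≠ 0) (n : ℤ) (f : {z : ℂ // z ≠ 0} → ℂ) :
    {z : ℂ // z ≠ 0} → ℂ :=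
  fun w => -Complex.I * q⁻¹ * (w : ℂ) * (q ^ n * f w - q ^ (-n) * f (shiftPt q hq w)) / (q - q⁻¹)

/-- `(Y f)(w) = i q^(−n+1) (f(w) − f(q⁻² w))/((q − q⁻¹) w)`. -/
noncomputable def Yop (q : ℂ) (hq : q ≠ 0) (n : ℤ) (f : {z : ℂ // z ≠ 0} → ℂ) :
    {z : ℂ // z ≠ 0} → ℂ :=
  fun w => Complex.I * q ^ (-n + 1) * (f w - f (shiftPt q hq w)) / ((q - q⁻¹) * (w : ℂ))

/-- `(Z f)(w) = q⁻ⁿ f(q⁻² w)`. -/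
noncomputable def Zop (q : ℂ) (hq : q ≠ 0) (n : ℤ) (f : {z : ℂ // z ≠ 0} → ℂ) :
    {z : ℂ // z ≠ 0} → ℂ :=
  fun w => q ^ (-n) * f (shiftPt q hq w)

/-!
Write `T f (w) = f (q⁻² w)`. The operators `X, Y, Z` are built from `T`, constants and
multiplication by `w` or `w⁻¹`, and `T` moves past multiplication by `w^{±1}` at the cost of a
factor `q^{∓2}`; this gives the first two relations. For the third, `X Y f (w)` and `Y X f (w)`
are combinations of `f (w)`, `f (q⁻² w)`, `f (q⁻⁴ w)` over `(q - q⁻¹)²`; in `q⁻¹ X Y - q Y X` the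
`f (q⁻² w)` terms cancel and the numerator is `-(q - q⁻¹) (f - Z² f)(w)`.
-/

open Complex

section

variable {q : ℂ} (hq : q ≠ 0) (n : ℤ)

theorem shiftPt_coe (w : {z : ℂ // z ≠ 0}) : (shiftPt q hq w : ℂ) = (q ^ 2)⁻¹ * w := by
  simp [shiftPt, zpow_neg]

theorem Zop_Xop (f : {z : ℂ // z ≠ 0} → ℂ) :
    Zop q hq n (Xop q hq n f) = q⁻¹ ^ 2 • Xop q hq n (Zop q hq n f) := by
  funext w
  simp only [Xop, Zop, shiftPt_coe, Pi.smul_apply, smul_eq_mul, zpow_neg]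
  field_simp

theorem Zop_Yop (f : {z : ℂ // z ≠ 0} → ℂ) :
    Zop q hq n (Yop q hq n f) = q ^ 2 • Yop q hq n (Zop q hq n f) := by
  funext w
  have hw := w.2
  simp only [Yop, Zop, shiftPt_coe, Pi.smul_apply, smul_eq_mul, zpow_neg, zpow_add_one₀ hq]
  field_simp

theorem Zop_Zop_apply (f : {z : ℂ // z ≠ 0} → ℂ) (w : {z : ℂ // z ≠ 0}) :
    Zop q hq n (Zop q hq n f) w = ((q ^ n) ^ 2)⁻¹ * f (shiftPt q hq (shiftPt q hq w)) := by
  simp only [Zop, zpow_neg]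
  ring

theorem Xop_Yop_apply (f : {z : ℂ // z ≠ 0} → ℂ) (w : {z : ℂ // z ≠ 0}) :
    Xop q hq n (Yop q hq n f) w =
      (f w - f (shiftPt q hq w)
        - q ^ 2 / (q ^ n) ^ 2 * (f (shiftPt q hq w) - f (shiftPt q hq (shiftPt q hq w))))
        / (q - q⁻¹) ^ 2 := by
  have hw := w.2
  simp only [Xop, Yop, shiftPt_coe, zpow_neg, zpow_add_one₀ hq]
  field_simp
  ring_nf
  simp only [I_sq]
  ring

theorem Yop_Xop_apply (f : {z : ℂ // z ≠ 0} → ℂ) (w : {z : ℂ // z ≠ 0}) :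
    Yop q hq n (Xop q hq n f) w =
      (f w - ((q ^ n) ^ 2)⁻¹ * f (shiftPt q hq w)
        - (q ^ 2)⁻¹ * (f (shiftPt q hq w) - ((q ^ n) ^ 2)⁻¹ * f (shiftPt q hq (shiftPt q hq w))))
        / (q - q⁻¹) ^ 2 := by
  have hw := w.2
  simp only [Xop, Yop, shiftPt_coe, zpow_neg, zpow_add_one₀ hq]
  field_simp
  ring_nf
  simp only [I_sq]
  ring

theorem Xop_Yop_sub_Yop_Xop (f : {z : ℂ // z ≠ 0} → ℂ) :
    q⁻¹ • Xop q hq n (Yop q hq n f) - q • Yop q hq n (Xop q hq n f)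
      = -((q - q⁻¹)⁻¹ • (f - Zop q hq n (Zop q hq n f))) := by
  funext w
  have hqn : q ^ n ≠ 0 := zpow_ne_zero n hq
  -- `x⁻¹ = x / x ^ 2` holds also at `x = 0`, so it suffices to compare numerators.
  have hinv : (q - q⁻¹)⁻¹ = (q - q⁻¹) / (q - q⁻¹) ^ 2 := by rw [sq, div_self_mul_self']
  simp only [Pi.sub_apply, Pi.neg_apply, Pi.smul_apply, smul_eq_mul, Xop_Yop_apply, Yop_Xop_apply,
    Zop_Zop_apply, hinv]
  rw [mul_div_assoc', mul_div_assoc', div_sub_div_same, div_mul_eq_mul_div (q - q⁻¹), ← neg_div]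
  congr 1
  field_simp
  ring

end

theorem stmt_9_general (q : ℂ) (hq0 : q ≠ 0) (n : ℤ) :
    (∀ f : {z : ℂ // z ≠ 0} → ℂ,
      Zop q hq0 n (Xop q hq0 n f) = (q⁻¹ ^ 2) • Xop q hq0 n (Zop q hq0 n f)) ∧
    (∀ f : {z : ℂ // z ≠ 0} → ℂ,
      Zop q hq0 n (Yop q hq0 n f) = (q ^ 2) • Yop q hq0 n (Zop q hq0 n f)) ∧
    (∀ f : {z : ℂ // z ≠ 0} → ℂ,
      q⁻¹ • Xop q hq0 n (Yop q hq0 n f) - q • Yop q hq0 n (Xop q hq0 n f)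
        = -((q - q⁻¹)⁻¹ • (f - Zop q hq0 n (Zop q hq0 n f)))) :=
  ⟨Zop_Xop hq0 n, Zop_Yop hq0 n, Xop_Yop_sub_Yop_Xop hq0 n⟩

/-- For `q ≠ 0`, `q² ≠ 1` and `n ∈ ℤ`, the operators `X, Y, Z` on functions
`ℂ∖{0} → ℂ` satisfy `Z X = q⁻² X Z`, `Z Y = q² Y Z` and
`q⁻¹ X Y − q Y X = −(1 − Z²)/(q − q⁻¹)`. -/
theorem stmt_9 (q : ℂ) (hq0 : q ≠ 0) (hq2 : q ^ 2 ≠ 1) (n : ℤ) :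
    (∀ f : {z : ℂ // z ≠ 0} → ℂ,
      Zop q hq0 n (Xop q hq0 n f) = (q⁻¹ ^ 2) • Xop q hq0 n (Zop q hq0 n f)) ∧
    (∀ f : {z : ℂ // z ≠ 0} → ℂ,
      Zop q hq0 n (Yop q hq0 n f) = (q ^ 2) • Yop q hq0 n (Zop q hq0 n f)) ∧
    (∀ f : {z : ℂ // z ≠ 0} → ℂ,
      q⁻¹ • Xop q hq0 n (Yop q hq0 n f) - q • Yop q hq0 n (Xop q hq0 n f)
        = -((q - q⁻¹)⁻¹ • (f - Zop q hq0 n (Zop q hq0 n f)))) :=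
  stmt_9_general q hq0 n
end

section
/- Let Q be an odd positive integer, P ∈ {1,...,Q−1} with gcd(P,Q) = 1, q = exp(iπP/Q), fix n ∈ {1,...,Q} and set d = Q+1−n. For j ∈ ℤ, j ≥ 0, define the function φ_j : ℂ∖{0} → ℂ by φ_j(w) = (−i)^j q^{j(j−1)/2 + n j} w^{−Q+j}, and define operators X, Y, Z on functions on ℂ∖{0} by (X f)(w) = −i q⁻¹ w (q^n f(w) − q^{−n} f(q⁻² w))/(q − q⁻¹), (Y f)(w) = i q^{−n+1} (f(w) − f(q⁻² w))/((q − q⁻¹) w), (Z f)(w) = q^{−n} f(q⁻² w). Then for 0 ≤ j ≤ d−1: Z·φ_j = q^{−n−2j} φ_j; X·φ_j = q^{−n−2j−1}[n+j]_q φ_{j+1} (in particular X·φ_{d−1} = 0 since [n+d−1]_q = [Q]_q = 0); Y·φ_j = [j]_q φ_{j−1} for j ≥ 1 and Y·φ_0 = 0. -/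
/-- The function `φ_j(w) = (−i)^j q^(j(j−1)/2 + n j) w^(−Q+j)`. -/
noncomputable def phi (q : ℂ) (Q n j : ℕ) : {z : ℂ // z ≠ 0} → ℂ :=
  fun w => (-Complex.I) ^ j * q ^ (j * (j - 1) / 2 + n * j) * (w : ℂ) ^ (-(Q : ℤ) + (j : ℤ))

/-
The functions `φ_j` are monomials `w ^ (j - Q)`, so each of `X`, `Y`, `Z` acts on them by the
substitution `w ↦ q⁻² w`, which multiplies `φ_j` by `q ^ (2Q - 2j) = q ^ (-2j)` because
`q ^ (2Q) = 1`, and by multiplication or division by `w`, which moves `φ_j` to `φ_{j ± 1}`.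
The same identity `q ^ (2Q) = 1` gives `q ^ Q = q ^ (-Q)`, i.e. `[Q]_q = 0`.
-/

lemma qnum_eq_zero_of_zpow_two_mul_eq_one {q : ℂ} {Q : ℤ} (hq0 : q ≠ 0) (h2Q : q ^ (2 * Q) = 1) :
    qnum q Q = 0 := by
  have : q ^ Q = q ^ (-Q) := by
    rw [zpow_neg]
    exact eq_inv_of_mul_eq_one_left (by rw [← zpow_add₀ hq0, ← two_mul, h2Q])
  rw [qnum, this, sub_self, zero_div]

lemma exp_pi_mul_I_div_zpow_two_mul_eq_one (P : ℕ) {Q : ℕ} (hQ : Q ≠ 0) :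
    Complex.exp (↑Real.pi * Complex.I * (P : ℂ) / (Q : ℂ)) ^ (2 * (Q : ℤ)) = 1 := by
  rw [show 2 * (Q : ℤ) = ((2 * Q : ℕ) : ℤ) by push_cast; ring, zpow_natCast,
    ← Complex.exp_nat_mul]
  convert Complex.exp_nat_mul_two_pi_mul_I P using 2
  push_cast
  field_simp

lemma phi_succ_apply (q : ℂ) (Q n j : ℕ) (w : {z : ℂ // z ≠ 0}) :
    phi q Q n (j + 1) w = -Complex.I * q ^ (n + j) * (w * phi q Q n j w) := by
  simp only [phi, Nat.triangle_succ, Nat.cast_succ]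
  rw [show -(Q : ℤ) + (j + 1) = -Q + j + 1 by ring, zpow_add_one₀ w.2]
  ring

section RootOfUnity

variable {q : ℂ} (hq0 : q ≠ 0) {Q : ℕ} (n : ℕ)

lemma phi_shiftPt (h2Q : q ^ (2 * (Q : ℤ)) = 1) (j : ℕ) (w : {z : ℂ // z ≠ 0}) :
    phi q Q n j (shiftPt q hq0 w) = (q ^ (2 * j))⁻¹ * phi q Q n j w := by
  simp only [phi, shiftPt]
  rw [mul_zpow, ← zpow_mul, show (-2 : ℤ) * (-Q + j) = 2 * Q + -(2 * j : ℕ) by push_cast; ring,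
    zpow_add₀ hq0, h2Q, one_mul, zpow_neg, zpow_natCast]
  ring

lemma Zop_phi (h2Q : q ^ (2 * (Q : ℤ)) = 1) (j : ℕ) :
    Zop q hq0 n (phi q Q n j) = q ^ (-(n : ℤ) - 2 * (j : ℤ)) • phi q Q n j := by
  funext w
  rw [Zop, phi_shiftPt hq0 n h2Q, Pi.smul_apply, smul_eq_mul, ← mul_assoc, ← zpow_natCast,
    ← zpow_neg, ← zpow_add₀ hq0]
  push_cast
  ring_nf

lemma Xop_phi (h2Q : q ^ (2 * (Q : ℤ)) = 1) (j : ℕ) :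
    Xop q hq0 n (phi q Q n j)
      = (q ^ (-(n : ℤ) - 2 * (j : ℤ) - 1) * qnum q (n + j)) • phi q Q n (j + 1) := by
  funext w
  rw [show -(n : ℤ) - 2 * j - 1 = -((n + 2 * j + 1 : ℕ) : ℤ) by push_cast; ring,
    show (n : ℤ) + j = ((n + j : ℕ) : ℤ) by push_cast; ring]
  simp only [Xop, qnum, Pi.smul_apply, smul_eq_mul, phi_shiftPt hq0 n h2Q, phi_succ_apply,
    zpow_neg, zpow_natCast, div_eq_mul_inv]
  -- `q - q⁻¹` may vanish (`q = ±1`), so its inverse is kept as an opaque factor.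
  generalize (q - q⁻¹)⁻¹ = D
  field_simp
  ring

lemma Yop_phi_succ (h2Q : q ^ (2 * (Q : ℤ)) = 1) (j : ℕ) :
    Yop q hq0 n (phi q Q n (j + 1)) = qnum q (j + 1 : ℕ) • phi q Q n j := by
  funext w
  have hw : (w : ℂ) ≠ 0 := w.2
  simp only [Yop, qnum, Pi.smul_apply, smul_eq_mul, phi_shiftPt hq0 n h2Q, phi_succ_apply,
    zpow_add₀ hq0, zpow_neg, zpow_natCast, zpow_one, div_eq_mul_inv, mul_inv]
  generalize (q - q⁻¹)⁻¹ = D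
  field_simp
  ring_nf
  rw [Complex.I_sq]
  ring

lemma Yop_phi_zero (h2Q : q ^ (2 * (Q : ℤ)) = 1) : Yop q hq0 n (phi q Q n 0) = 0 := by
  funext w
  simp [Yop, phi_shiftPt hq0 n h2Q]

end RootOfUnity

theorem stmt_10_general (Q P : ℕ) (hQpos : 0 < Q)
    (q : ℂ) (hq : q = Complex.exp (↑Real.pi * Complex.I * (P : ℂ) / (Q : ℂ)))
    (hq0 : q ≠ 0)
    (n : ℕ) (hnQ : n ≤ Q) (d : ℕ) (hd : d = Q + 1 - n) :
    (∀ j : ℕ, j ≤ d - 1 →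
        Zop q hq0 (n : ℤ) (phi q Q n j) = (q ^ (-(n : ℤ) - 2 * (j : ℤ))) • phi q Q n j) ∧
    (∀ j : ℕ, j ≤ d - 1 →
        Xop q hq0 (n : ℤ) (phi q Q n j)
          = (q ^ (-(n : ℤ) - 2 * (j : ℤ) - 1) * qnum q ((n : ℤ) + (j : ℤ))) • phi q Q n (j + 1)) ∧
    (qnum q ((n : ℤ) + (d : ℤ) - 1) = 0 ∧ Xop q hq0 (n : ℤ) (phi q Q n (d - 1)) = 0) ∧
    (∀ j : ℕ, 1 ≤ j → j ≤ d - 1 →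
        Yop q hq0 (n : ℤ) (phi q Q n j) = (qnum q (j : ℤ)) • phi q Q n (j - 1)) ∧
    Yop q hq0 (n : ℤ) (phi q Q n 0) = 0 := by
  have h2Q : q ^ (2 * (Q : ℤ)) = 1 := hq ▸ exp_pi_mul_I_div_zpow_two_mul_eq_one P hQpos.ne'
  have hqnumQ : qnum q Q = 0 := qnum_eq_zero_of_zpow_two_mul_eq_one hq0 h2Q
  have hlast : (n : ℤ) + (d - 1 : ℕ) = Q := by omega
  refine ⟨fun j _ => Zop_phi hq0 n h2Q j, fun j _ => Xop_phi hq0 n h2Q j,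
    ⟨by rwa [show (n : ℤ) + d - 1 = Q by omega], ?_⟩, fun j hj _ => ?_, Yop_phi_zero hq0 n h2Q⟩
  · rw [Xop_phi hq0 n h2Q, hlast, hqnumQ, mul_zero, zero_smul]
  · obtain ⟨k, rfl⟩ := Nat.exists_eq_add_of_le' hj
    exact Yop_phi_succ hq0 n h2Q k

/-- For `q = exp(iπP/Q)`, `n ∈ {1,...,Q}`, `d = Q+1−n` and `0 ≤ j ≤ d−1`:
`Z·φ_j = q^(−n−2j) φ_j`; `X·φ_j = q^(−n−2j−1)[n+j]_q φ_{j+1}` (in particular `X·φ_{d−1} = 0`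
since `[n+d−1]_q = [Q]_q = 0`); `Y·φ_j = [j]_q φ_{j−1}` for `j ≥ 1`, and `Y·φ_0 = 0`. -/
theorem stmt_10 (Q P : ℕ) (hQodd : Odd Q) (hQpos : 0 < Q)
    (hP1 : 1 ≤ P) (hPQ : P ≤ Q - 1) (hcop : Nat.Coprime P Q)
    (q : ℂ) (hq : q = Complex.exp (↑Real.pi * Complex.I * (P : ℂ) / (Q : ℂ)))
    (hq0 : q ≠ 0)
    (n : ℕ) (hn1 : 1 ≤ n) (hnQ : n ≤ Q) (d : ℕ) (hd : d = Q + 1 - n) :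
    (∀ j : ℕ, j ≤ d - 1 →
        Zop q hq0 (n : ℤ) (phi q Q n j) = (q ^ (-(n : ℤ) - 2 * (j : ℤ))) • phi q Q n j) ∧
    (∀ j : ℕ, j ≤ d - 1 →
        Xop q hq0 (n : ℤ) (phi q Q n j)
          = (q ^ (-(n : ℤ) - 2 * (j : ℤ) - 1) * qnum q ((n : ℤ) + (j : ℤ))) • phi q Q n (j + 1)) ∧
    (qnum q ((n : ℤ) + (d : ℤ) - 1) = 0 ∧ Xop q hq0 (n : ℤ) (phi q Q n (d - 1)) = 0) ∧
    (∀ j : ℕ, 1 ≤ j → j ≤ d - 1 →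
        Yop q hq0 (n : ℤ) (phi q Q n j) = (qnum q (j : ℤ)) • phi q Q n (j - 1)) ∧
    Yop q hq0 (n : ℤ) (phi q Q n 0) = 0 :=
  stmt_10_general Q P hQpos q hq hq0 n hnQ d hd
end

section
/- Let Q be an odd positive integer, P ∈ {1,...,Q−1} with gcd(P,Q) = 1, q = exp(iπP/Q), fix n ∈ {1,...,Q} and set d = Q+1−n. In the field ℂ(w) of rational functions, define ψ_m(w) = (∏_{j=0}^{m−1}(q^{2j+n} w − i)) / (∏_{j=0}^{n+m−1}(q^{2j−2m−n} w + i)) for m = 0,...,d−1, and let the operators X, Y, Z act on ℂ(w) by (X f)(w) = −i q⁻¹ w (q^n f(w) − q^{−n} f(q⁻² w))/(q − q⁻¹), (Y f)(w) = i q^{−n+1} (f(w) − f(q⁻² w))/((q − q⁻¹) w), (Z f)(w) = q^{−n} f(q⁻² w). Then the ℂ-linear span of {ψ_0, ψ_1, ..., ψ_{d−1}} is invariant under X, Y and Z. -/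
/-!
Write `a = q^(2m+n)`, `t = q⁻²` and `u = qⁿ`. The product formula gives
`ψ_{m+1} (tw + ia) = a ψ_m (aw - i)` and `σψ_m (atw - i)(tw + ia) = a ψ_m (utw - i)(utw + i)`,
so `Xψ_m`, `Yψ_m` and `Zψ_m` all have the form `ψ_m p / ((atw - i)(tw + ia))` with `p` a
quadratic polynomial. The quadratics `(aw - i)(atw - i)`, `(atw - i)(tw + ia)`, `(tw + ia)(w + ia)`,
consecutive products in a chain of four linear forms, span all quadratics as soon as `-1` is not an
even power of `q` (which holds because `q^(2Q) = 1` with `Q` odd), and divided by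
`(atw - i)(tw + ia)` they turn `ψ_m` into multiples of `ψ_{m+1}`, `ψ_m` and `ψ_{m-1}`.
At the ends of the range the coefficient of the missing neighbour vanishes: it is proportional
to the value of `p` at a root of `(atw - i)(tw + ia)`, and that value is zero because `a = u` when
`m = 0`, and `u²a² = q^(4Q) = 1` when `m = d - 1`.
-/

/-- The rational function
`ψ_m(w) = (∏_{j=0}^{m−1}(q^{2j+n} w − i)) / (∏_{j=0}^{n+m−1}(q^{2j−2m−n} w + i))`. -/
noncomputable def psi (q : ℂ) (n m : ℕ) : RatFunc ℂ :=
  (∏ j ∈ Finset.range m,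
      (algebraMap ℂ (RatFunc ℂ) (q ^ (2 * j + n)) * RatFunc.X
        - algebraMap ℂ (RatFunc ℂ) Complex.I)) /
  (∏ j ∈ Finset.range (n + m),
      (algebraMap ℂ (RatFunc ℂ) (q ^ (2 * (j : ℤ) - 2 * (m : ℤ) - (n : ℤ))) * RatFunc.X
        + algebraMap ℂ (RatFunc ℂ) Complex.I))

open Finset RatFunc Complex

theorem map_prod_range_mul {M F : Type*} [CommMonoid M] [FunLike F M M] [MonoidHomClass F M M]
    (σ : F) (f : ℤ → M) (hf : ∀ j, σ (f j) = f (j - 1)) (k : ℕ) :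
    σ (∏ j ∈ range k, f j) * f (k - 1) = f (-1) * ∏ j ∈ range k, f j := by
  rw [map_prod]
  simp_rw [hf]
  induction k with
  | zero => simp
  | succ k ih =>
    rw [prod_range_succ, prod_range_succ, ← mul_assoc, ← ih]
    push_cast
    rw [add_sub_cancel_right, mul_right_comm]

/-- `c₀ s² - c₁ s z + c₂ z²` is `s²` times the value of the quadratic at the root of `s x + z`. -/
theorem exists_eq_chain_comb {k K : Type*} [Field k] [CommRing K] (f : k →+* K)
    {s₁ s₂ s₃ s₄ z₁ z₂ z₃ z₄ : k} (hs₂ : s₂ ≠ 0) (hs₃ : s₃ ≠ 0)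
    (h₁₃ : s₃ * z₁ - s₁ * z₃ ≠ 0) (h₂₃ : s₃ * z₂ - s₂ * z₃ ≠ 0) (h₂₄ : s₂ * z₄ - s₄ * z₂ ≠ 0)
    (c₀ c₁ c₂ : k) (x : K) :
    ∃ α β γ : k,
      (c₀ * s₃ ^ 2 - c₁ * s₃ * z₃ + c₂ * z₃ ^ 2 = 0 → α = 0) ∧
      (c₀ * s₂ ^ 2 - c₁ * s₂ * z₂ + c₂ * z₂ ^ 2 = 0 → γ = 0) ∧
      f c₀ + f c₁ * x + f c₂ * x ^ 2 =
        f α * ((f s₁ * x + f z₁) * (f s₂ * x + f z₂)) +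
        f β * ((f s₂ * x + f z₂) * (f s₃ * x + f z₃)) +
        f γ * ((f s₃ * x + f z₃) * (f s₄ * x + f z₄)) := by
  have hD₃ : (s₃ * z₁ - s₁ * z₃) * (s₃ * z₂ - s₂ * z₃) ≠ 0 := mul_ne_zero h₁₃ h₂₃
  have hD₂ : (s₂ * z₃ - s₃ * z₂) * (s₂ * z₄ - s₄ * z₂) ≠ 0 :=
    mul_ne_zero (by rwa [← neg_sub, neg_ne_zero]) h₂₄
  obtain ⟨α, hα⟩ : ∃ α, α * ((s₃ * z₁ - s₁ * z₃) * (s₃ * z₂ - s₂ * z₃)) =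
      c₀ * s₃ ^ 2 - c₁ * s₃ * z₃ + c₂ * z₃ ^ 2 := ⟨_, div_mul_cancel₀ _ hD₃⟩
  obtain ⟨γ, hγ⟩ : ∃ γ, γ * ((s₂ * z₃ - s₃ * z₂) * (s₂ * z₄ - s₄ * z₂)) =
      c₀ * s₂ ^ 2 - c₁ * s₂ * z₂ + c₂ * z₂ ^ 2 := ⟨_, div_mul_cancel₀ _ hD₂⟩
  obtain ⟨β, hβ⟩ : ∃ β, β * (s₂ * s₃) = c₂ - α * (s₁ * s₂) - γ * (s₃ * s₄) :=
    ⟨_, div_mul_cancel₀ _ (mul_ne_zero hs₂ hs₃)⟩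
  refine ⟨α, β, γ, fun h => by simpa [h, hD₃] using hα, fun h => by simpa [h, hD₂] using hγ, ?_⟩
  set e₀ := c₀ - (α * (z₁ * z₂) + β * (z₂ * z₃) + γ * (z₃ * z₄))
  set e₁ := c₁ - (α * (s₁ * z₂ + z₁ * s₂) + β * (s₂ * z₃ + z₂ * s₃) + γ * (s₃ * z₄ + z₃ * s₄))
  -- the remainder `e₀ + e₁ x` vanishes at the roots of the second and third linear forms
  have E₃ : e₀ * s₃ ^ 2 - e₁ * s₃ * z₃ = 0 := by linear_combination -hα + z₃ ^ 2 * hβ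
  have E₂ : e₀ * s₂ ^ 2 - e₁ * s₂ * z₂ = 0 := by linear_combination -hγ + z₂ ^ 2 * hβ
  have hdet : s₂ * s₃ * (s₃ * z₂ - s₂ * z₃) ≠ 0 := mul_ne_zero (mul_ne_zero hs₂ hs₃) h₂₃
  have he₀ : e₀ = 0 := mul_left_cancel₀ hdet (by linear_combination s₂ * z₂ * E₃ - s₃ * z₃ * E₂)
  have he₁ : e₁ = 0 := mul_left_cancel₀ hdet (by linear_combination s₂ ^ 2 * E₃ - s₃ ^ 2 * E₂)
  have hc₀ := congrArg f (sub_eq_zero.mp he₀)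
  have hc₁ := congrArg f (sub_eq_zero.mp he₁)
  have hc₂ := congrArg f hβ
  simp only [map_add, map_mul, map_sub] at hc₀ hc₁ hc₂
  linear_combination hc₀ + hc₁ * x - hc₂ * x ^ 2

theorem zpow_two_mul_ne_neg_one {K : Type*} [DivisionRing K] [CharZero K] {q : K} {Q : ℕ}
    (hQ : Odd Q) (h : q ^ (2 * Q) = 1) (k : ℤ) : q ^ (2 * k) ≠ -1 := by
  intro hk
  have : (q ^ (2 * k)) ^ Q = 1 := by
    rw [← zpow_natCast, ← zpow_mul, mul_right_comm, zpow_mul, ← Nat.cast_ofNat, ← Nat.cast_mul,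
      zpow_natCast, h, one_zpow]
  rw [hk, hQ.neg_one_pow] at this
  norm_num at this

theorem exp_pi_mul_I_div_pow_two_mul {P Q : ℕ} (hQ : Q ≠ 0) :
    exp (Real.pi * I * P / Q) ^ (2 * Q) = 1 := by
  rw [← exp_nat_mul, show ((2 * Q : ℕ) : ℂ) * (Real.pi * I * P / Q) = P * (2 * Real.pi * I) by
    push_cast; field_simp]
  exact_mod_cast exp_int_mul_two_pi_mul_I P

theorem C_I_mul_C_I : C I * C I = (-1 : RatFunc ℂ) := by
  rw [← map_mul, I_mul_I, map_neg, map_one]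

theorem C_mul_X_add_C_ne_zero {a : ℂ} (ha : a ≠ 0) (b : ℂ) : C a * X + C b ≠ 0 := by
  rw [← algebraMap_C, ← algebraMap_C, ← algebraMap_X, ← map_mul, ← map_add]
  refine algebraMap_ne_zero fun h => ha ?_
  simpa using congrArg (Polynomial.coeff · 1) h

theorem C_mul_mem {V : Submodule ℂ (RatFunc ℂ)} (z : ℂ) {f : RatFunc ℂ} (hf : f ∈ V) :
    C z * f ∈ V := by
  rw [← algebraMap_eq_C, ← Algebra.smul_def]
  exact V.smul_mem z hf

theorem C_zpow_mul_C_zpow {q : ℂ} (hq : q ≠ 0) {i j k : ℤ} (h : i + j = k) :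
    C (q ^ i) * C (q ^ j) = C (q ^ k) := by
  rw [← map_mul, ← zpow_add₀ hq, h]

theorem map_C_mul_X_add_C {t : ℂ} (σ : RatFunc ℂ →ₐ[ℂ] RatFunc ℂ) (hσ : σ X = C t * X)
    (c z : ℂ) : σ (C c * X + C z) = C (c * t) * X + C z := by
  have hC (w : ℂ) : σ (C w) = C w := σ.commutes w
  rw [map_add, map_mul, hC, hC, hσ, map_mul, mul_assoc]

theorem mem_of_mul_eq_chain {V : Submodule ℂ (RatFunc ℂ)} {a t c₀ c₁ c₂ : ℂ} (ha : a ≠ 0)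
    (ht : t ≠ 0) (h₁ : a ^ 2 + 1 ≠ 0) (h₂ : a ^ 2 * t + 1 ≠ 0) (h₃ : a ^ 2 + t ≠ 0)
    {φ g : RatFunc ℂ} (hφ : φ ∈ V)
    (hsucc : c₀ * t ^ 2 - c₁ * t * (I * a) + c₂ * (I * a) ^ 2 = 0 ∨
      ∃ φnext ∈ V, φnext * (C t * X + C (I * a)) = C a * φ * (C a * X - C I))
    (hpred : c₀ * (a * t) ^ 2 - c₁ * (a * t) * -I + c₂ * (-I) ^ 2 = 0 ∨
      ∃ φprev ∈ V, φ * (X + C (I * a)) = C a * φprev * (C (a * t) * X - C I))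
    (hg : g * ((C (a * t) * X - C I) * (C t * X + C (I * a))) =
      φ * (C c₀ + C c₁ * X + C c₂ * X ^ 2)) :
    g ∈ V := by
  have hI : I ≠ 0 := I_ne_zero
  obtain ⟨α, β, γ, hα, hγ, hp⟩ := exists_eq_chain_comb C (s₁ := a) (s₄ := 1) (z₁ := -I)
    (z₂ := -I) (z₃ := I * a) (z₄ := I * a) (mul_ne_zero ha ht) ht
    (by rw [show t * -I - a * (I * a) = -I * (a ^ 2 + t) by ring]
        exact mul_ne_zero (neg_ne_zero.mpr hI) h₃)
    (by rw [show t * -I - a * t * (I * a) = -I * t * (a ^ 2 + 1) by ring]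
        exact mul_ne_zero (mul_ne_zero (neg_ne_zero.mpr hI) ht) h₁)
    (by rw [show a * t * (I * a) - 1 * -I = I * (a ^ 2 * t + 1) by ring]
        exact mul_ne_zero hI h₂)
    c₀ c₁ c₂ X
  simp only [map_neg, map_one, one_mul, ← sub_eq_add_neg] at hp
  set F := (C (a * t) * X - C I) * (C t * X + C (I * a))
  have hF : F ≠ 0 := by
    refine mul_ne_zero ?_ (C_mul_X_add_C_ne_zero ht _)
    rw [sub_eq_add_neg, ← map_neg]
    exact C_mul_X_add_C_ne_zero (mul_ne_zero ha ht) _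
  obtain ⟨vnext, hvnext, hvnextF⟩ :
      ∃ v ∈ V, C α * (φ * ((C a * X - C I) * (C (a * t) * X - C I))) = v * F := by
    rcases hsucc with h | ⟨φnext, hφnext, hrel⟩
    · exact ⟨0, V.zero_mem, by simp [hα h]⟩
    · refine ⟨C (α / a) * φnext, C_mul_mem _ hφnext, ?_⟩
      have : C (α / a) * C a = C α := by rw [← map_mul, div_mul_cancel₀ _ ha]
      linear_combination (-(C (α / a)) * (C (a * t) * X - C I)) * hrel
        - φ * (C a * X - C I) * (C (a * t) * X - C I) * this
  obtain ⟨vprev, hvprev, hvprevF⟩ :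
      ∃ v ∈ V, C γ * (φ * ((C t * X + C (I * a)) * (X + C (I * a)))) = v * F := by
    rcases hpred with h | ⟨φprev, hφprev, hrel⟩
    · exact ⟨0, V.zero_mem, by simp [hγ h]⟩
    · refine ⟨C (γ * a) * φprev, C_mul_mem _ hφprev, ?_⟩
      linear_combination (C γ * (C t * X + C (I * a))) * hrel - φprev * F * map_mul C γ a
  have hgF : g * F = (vnext + C β * φ + vprev) * F := by
    linear_combination hg + φ * hp + hvnextF + hvprevF
  rw [mul_right_cancel₀ hF hgF]
  exact V.add_mem (V.add_mem hvnext (C_mul_mem β hφ)) hvprev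

theorem qDifference_mem_of_chain {V : Submodule ℂ (RatFunc ℂ)} {a t u : ℂ} (ha : a ≠ 0) (ht : t ≠ 0)
    (hu : u ≠ 0) (h₁ : a ^ 2 + 1 ≠ 0) (h₂ : a ^ 2 * t + 1 ≠ 0) (h₃ : a ^ 2 + t ≠ 0)
    {φ φσ : RatFunc ℂ} (hφ : φ ∈ V)
    (hsucc : u ^ 2 * a ^ 2 = 1 ∨
      ∃ φnext ∈ V, φnext * (C t * X + C (I * a)) = C a * φ * (C a * X - C I))
    (hpred : a = u ∨
      ∃ φprev ∈ V, φ * (X + C (I * a)) = C a * φprev * (C (a * t) * X - C I))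
    (hσ : φσ * ((C (a * t) * X - C I) * (C t * X + C (I * a))) =
      C a * φ * ((C (u * t) * X - C I) * (C (u * t) * X + C I))) :
    X * (u • φ - u⁻¹ • φσ) ∈ V ∧ X⁻¹ * (φ - φσ) ∈ V ∧ φσ ∈ V := by
  have hu' : C u⁻¹ * C u = 1 := by rw [← map_mul, inv_mul_cancel₀ hu, map_one]
  have hX : X⁻¹ * X = (1 : RatFunc ℂ) := inv_mul_cancel₀ X_ne_zero
  simp only [map_mul] at hσ
  -- with `F = (atw - i)(tw + ia)` and `B = (utw - i)(utw + i)` the three quadratics are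
  -- `w (uF - u⁻¹aB)`, `(F - aB) / w` and `aB`
  refine ⟨mem_of_mul_eq_chain (c₀ := 0) (c₁ := a * (u - u⁻¹)) (c₂ := I * u * t * (a ^ 2 - 1))
      ha ht h₁ h₂ h₃ hφ (hsucc.imp_left fun h => ?_) (hpred.imp_left fun h => ?_) ?_,
    mem_of_mul_eq_chain (c₀ := I * t * (a ^ 2 - 1)) (c₁ := a * t ^ 2 * (1 - u ^ 2)) (c₂ := 0)
      ha ht h₁ h₂ h₃ hφ (hsucc.imp_left fun h => ?_) (hpred.imp_left fun h => ?_) ?_,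
    mem_of_mul_eq_chain (c₀ := a) (c₁ := 0) (c₂ := a * u ^ 2 * t ^ 2)
      ha ht h₁ h₂ h₃ hφ (hsucc.imp_left fun h => ?_) (hpred.imp_left fun h => ?_) ?_⟩
  · grind [I_sq]
  · grind [I_sq]
  · simp only [Algebra.smul_def, algebraMap_eq_C, map_mul, map_sub, map_zero, map_pow, map_one]
    linear_combination (-X * C u⁻¹) * hσ - φ * C a * C t ^ 2 * C u * X ^ 3 * hu'
      + φ * C a * X * (C u⁻¹ - C u) * C_I_mul_C_I
  · grind [I_sq]
  · grind [I_sq]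
  · simp only [map_mul, map_sub, map_zero, map_pow, map_one]
    linear_combination (-X⁻¹) * hσ
      + φ * (C I * C t * (C a ^ 2 - 1) + C a * C t ^ 2 * (1 - C u ^ 2) * X) * hX
  · grind [I_sq]
  · subst h
    linear_combination a ^ 3 * t ^ 2 * I_sq
  · simp only [map_mul, map_zero, map_pow]
    linear_combination hσ - C a * φ * C_I_mul_C_I

theorem sq_mul_sq_eq_one {q : ℂ} (hq : q ≠ 0) {Q n m : ℕ} (h : q ^ (2 * Q) = 1)
    (hQ : m + n = Q) : (q ^ (n : ℤ)) ^ 2 * (q ^ (2 * (m : ℤ) + n)) ^ 2 = 1 := by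
  rw [← zpow_natCast, ← zpow_natCast, ← zpow_mul, ← zpow_mul, ← zpow_add₀ hq,
    show (n : ℤ) * (2 : ℕ) + (2 * m + n) * (2 : ℕ) = (2 * Q : ℕ) * 2 by
      rw [← hQ]; push_cast; ring,
    zpow_mul, zpow_natCast, h, one_zpow]

theorem chain_nondegenerate {q : ℂ} (hq : q ≠ 0) (hodd : ∀ k : ℤ, q ^ (2 * k) ≠ -1) (k : ℤ) :
    (q ^ k) ^ 2 + 1 ≠ 0 ∧ (q ^ k) ^ 2 * q ^ (-2 : ℤ) + 1 ≠ 0 ∧ (q ^ k) ^ 2 + q ^ (-2 : ℤ) ≠ 0 := by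
  have hsq (j : ℤ) : (q ^ j) ^ 2 = q ^ (2 * j) := by
    rw [← zpow_natCast, ← zpow_mul, mul_comm]; rfl
  have hne (j : ℤ) : q ^ (2 * j) + 1 ≠ 0 := fun h => hodd j (eq_neg_of_add_eq_zero_left h)
  refine ⟨hsq k ▸ hne k, ?_, ?_⟩
  · rw [hsq, ← zpow_add₀ hq, show 2 * k + -2 = 2 * (k - 1) by ring]
    exact hne _
  · rw [hsq, show q ^ (2 * k) + q ^ (-2 : ℤ) = q ^ (-2 : ℤ) * (q ^ (2 * (k + 1)) + 1) by
      rw [mul_add, ← zpow_add₀ hq]; ring_nf]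
    exact mul_ne_zero (zpow_ne_zero _ hq) (hne _)

noncomputable def psiNum (q : ℂ) (n m : ℕ) : RatFunc ℂ :=
  ∏ j ∈ range m, (C (q ^ (2 * (j : ℤ) + n)) * X + C (-I))

noncomputable def psiDen (q : ℂ) (n m : ℕ) : RatFunc ℂ :=
  ∏ j ∈ range (n + m), (C (q ^ (2 * (j : ℤ) - 2 * m - n)) * X + C I)

theorem psi_eq_div (q : ℂ) (n m : ℕ) : psi q n m = psiNum q n m / psiDen q n m := by
  have h (j : ℕ) : q ^ (2 * j + n) = q ^ (2 * (j : ℤ) + n) := by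
    rw [← zpow_natCast]; push_cast; rfl
  simp only [psi, psiNum, psiDen, h, map_neg, ← sub_eq_add_neg]
  rfl

theorem psiDen_ne_zero {q : ℂ} (hq : q ≠ 0) (n m : ℕ) : psiDen q n m ≠ 0 :=
  prod_ne_zero_iff.mpr fun _ _ => C_mul_X_add_C_ne_zero (zpow_ne_zero _ hq) I

theorem psi_succ_mul {q : ℂ} (hq : q ≠ 0) (n m : ℕ) :
    psi q n (m + 1) * (C (q ^ (-2 : ℤ)) * X + C (I * q ^ (2 * (m : ℤ) + n))) =
      C (q ^ (2 * (m : ℤ) + n)) * psi q n m * (C (q ^ (2 * (m : ℤ) + n)) * X - C I) := by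
  set a := q ^ (2 * (m : ℤ) + n)
  set L := C (q ^ (-2 * (m : ℤ) - 2 - n)) * X + C I
  have hden : psiDen q n (m + 1) = psiDen q n m * L := by
    rw [psiDen, Nat.add_succ, prod_range_succ', psiDen]
    congr 1
    · exact prod_congr rfl fun j _ => by push_cast; ring_nf
    · simp only [L]; push_cast; ring_nf
  have hL : C a * L = C (q ^ (-2 : ℤ)) * X + C (I * a) := by
    rw [mul_add, ← mul_assoc, C_zpow_mul_C_zpow hq (k := -2) (by ring), map_mul, mul_comm (C I)]
  have hD := psiDen_ne_zero hq n m
  have hL0 : L ≠ 0 := C_mul_X_add_C_ne_zero (zpow_ne_zero _ hq) I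
  rw [psi_eq_div, psi_eq_div, psiNum, prod_range_succ, ← psiNum, hden, ← hL, div_mul_eq_mul_div,
    div_eq_iff (mul_ne_zero hD hL0), map_neg, ← sub_eq_add_neg]
  linear_combination (-(C a) * (C a * X - C I) * L) * div_mul_cancel₀ (psiNum q n m) hD

theorem psi_succ_mul_X_add {q : ℂ} (hq : q ≠ 0) (n m : ℕ) :
    psi q n (m + 1) * (X + C (I * q ^ (2 * ((m + 1 : ℕ) : ℤ) + n))) =
      C (q ^ (2 * ((m + 1 : ℕ) : ℤ) + n)) * psi q n m *
        (C (q ^ (2 * ((m + 1 : ℕ) : ℤ) + n) * q ^ (-2 : ℤ)) * X - C I) := by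
  have h := psi_succ_mul hq n m
  rw [show q ^ (2 * (m : ℤ) + n) = q ^ (2 * ((m + 1 : ℕ) : ℤ) + n) * q ^ (-2 : ℤ) by
    rw [← zpow_add₀ hq]; push_cast; ring_nf] at h
  refine mul_left_cancel₀ ((map_ne_zero C).mpr (zpow_ne_zero (-2) hq)) ?_
  simp only [map_mul] at h ⊢
  linear_combination h

theorem map_psi_mul {q : ℂ} (hq : q ≠ 0) (σ : RatFunc ℂ →ₐ[ℂ] RatFunc ℂ)
    (hσ : σ X = C (q ^ (-2 : ℤ)) * X) (n m : ℕ) :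
    σ (psi q n m) * ((C (q ^ (2 * (m : ℤ) + n) * q ^ (-2 : ℤ)) * X - C I) *
      (C (q ^ (-2 : ℤ)) * X + C (I * q ^ (2 * (m : ℤ) + n)))) =
      C (q ^ (2 * (m : ℤ) + n)) * psi q n m *
        ((C (q ^ (n : ℤ) * q ^ (-2 : ℤ)) * X - C I) *
          (C (q ^ (n : ℤ) * q ^ (-2 : ℤ)) * X + C I)) := by
  set a := q ^ (2 * (m : ℤ) + n)
  have shift (e : ℤ → ℤ) (he : ∀ j, e j - 2 = e (j - 1)) (z : ℂ) (j : ℤ) :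
      σ (C (q ^ e j) * X + C z) = C (q ^ e (j - 1)) * X + C z := by
    rw [map_C_mul_X_add_C σ hσ, ← zpow_add₀ hq, ← he]; rfl
  have hN : σ (psiNum q n m) * (C (q ^ (2 * ((m : ℤ) - 1) + n)) * X + C (-I)) =
      (C (q ^ (2 * (-1) + n : ℤ)) * X + C (-I)) * psiNum q n m :=
    map_prod_range_mul σ (fun j : ℤ => C (q ^ (2 * j + n)) * X + C (-I))
      (shift _ (fun j => by ring) _) m
  have hD : σ (psiDen q n m) * (C (q ^ (2 * (((n + m : ℕ) : ℤ) - 1) - 2 * m - n)) * X + C I) =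
      (C (q ^ (2 * (-1) - 2 * m - n : ℤ)) * X + C I) * psiDen q n m :=
    map_prod_range_mul σ (fun j : ℤ => C (q ^ (2 * j - 2 * m - n)) * X + C I)
      (shift _ (fun j => by ring) _) (n + m)
  have e₁ : q ^ (2 * ((m : ℤ) - 1) + n) = a * q ^ (-2 : ℤ) := by rw [← zpow_add₀ hq]; ring_nf
  have e₂ : q ^ (2 * (-1) + n : ℤ) = q ^ (n : ℤ) * q ^ (-2 : ℤ) := by
    rw [← zpow_add₀ hq]; ring_nf
  have e₃ : q ^ (2 * (((n + m : ℕ) : ℤ) - 1) - 2 * m - n) = q ^ (n : ℤ) * q ^ (-2 : ℤ) := by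
    rw [← zpow_add₀ hq]; push_cast; ring_nf
  have hL : C a * (C (q ^ (2 * (-1) - 2 * m - n : ℤ)) * X + C I) =
      C (q ^ (-2 : ℤ)) * X + C (I * a) := by
    rw [mul_add, ← mul_assoc, C_zpow_mul_C_zpow hq (k := -2) (by ring), map_mul, mul_comm (C I)]
  rw [e₁, e₂, map_neg, ← sub_eq_add_neg, ← sub_eq_add_neg] at hN
  rw [e₃] at hD
  have hD0 := psiDen_ne_zero hq n m
  have hσD0 : σ (psiDen q n m) ≠ 0 := (map_ne_zero_iff σ σ.injective).mpr hD0
  rw [psi_eq_div, map_div₀, div_mul_eq_mul_div, div_eq_iff hσD0]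
  linear_combination (C (q ^ (-2 : ℤ)) * X + C (I * a)) * hN
    - C a * (psiNum q n m / psiDen q n m) * (C (q ^ (n : ℤ) * q ^ (-2 : ℤ)) * X - C I) * hD
    - C a * (C (q ^ (n : ℤ) * q ^ (-2 : ℤ)) * X - C I) *
      (C (q ^ (2 * (-1) - 2 * m - n : ℤ)) * X + C I) * div_mul_cancel₀ (psiNum q n m) hD0
    - (C (q ^ (n : ℤ) * q ^ (-2 : ℤ)) * X - C I) * psiNum q n m * hL

theorem stmt_12_general (Q P : ℕ) (hQodd : Odd Q)
    (q : ℂ) (hq : q = Complex.exp (↑Real.pi * Complex.I * (P : ℂ) / (Q : ℂ)))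
    (n : ℕ) (d : ℕ) (hd : d = Q + 1 - n)
    (σ : RatFunc ℂ →ₐ[ℂ] RatFunc ℂ)
    (hσ : σ RatFunc.X = algebraMap ℂ (RatFunc ℂ) (q ^ (-2 : ℤ)) * RatFunc.X) :
    let Xr : RatFunc ℂ → RatFunc ℂ := fun f =>
      (-Complex.I * q⁻¹ / (q - q⁻¹)) •
        (RatFunc.X * ((q ^ (n : ℤ)) • f - (q ^ (-(n : ℤ))) • σ f))
    let Yr : RatFunc ℂ → RatFunc ℂ := fun f =>
      (Complex.I * q ^ (-(n : ℤ) + 1) / (q - q⁻¹)) • ((RatFunc.X)⁻¹ * (f - σ f))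
    let Zr : RatFunc ℂ → RatFunc ℂ := fun f => (q ^ (-(n : ℤ))) • σ f
    let S : Submodule ℂ (RatFunc ℂ) :=
      Submodule.span ℂ (Set.range fun m : Fin d => psi q n (m : ℕ))
    ∀ f ∈ S, Xr f ∈ S ∧ Yr f ∈ S ∧ Zr f ∈ S := by
  intro Xr Yr Zr S f hf
  have hq0 : q ≠ 0 := hq ▸ exp_ne_zero _
  have hq2Q : q ^ (2 * Q) = 1 := hq ▸ exp_pi_mul_I_div_pow_two_mul hQodd.pos.ne'
  have hψS (m : ℕ) (hm : m < d) : psi q n m ∈ S := Submodule.subset_span ⟨⟨m, hm⟩, rfl⟩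
  have hops (m : ℕ) (hm : m < d) :
      X * (q ^ (n : ℤ) • psi q n m - (q ^ (n : ℤ))⁻¹ • σ (psi q n m)) ∈ S ∧
        X⁻¹ * (psi q n m - σ (psi q n m)) ∈ S ∧ σ (psi q n m) ∈ S := by
    obtain ⟨h₁, h₂, h₃⟩ :=
      chain_nondegenerate hq0 (zpow_two_mul_ne_neg_one hQodd hq2Q) (2 * m + n)
    refine qDifference_mem_of_chain (zpow_ne_zero _ hq0) (zpow_ne_zero _ hq0) (zpow_ne_zero _ hq0)
      h₁ h₂ h₃ (hψS m hm) ?_ ?_ (map_psi_mul hq0 σ hσ n m)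
    · rcases (Nat.succ_le_of_lt hm).eq_or_lt with hlast | hnext
      · exact Or.inl (sq_mul_sq_eq_one hq0 hq2Q (by omega))
      · exact Or.inr ⟨_, hψS (m + 1) hnext, psi_succ_mul hq0 n m⟩
    · rcases m with _ | k
      · exact Or.inl (by simp)
      · exact Or.inr ⟨_, hψS k (by omega), psi_succ_mul_X_add hq0 n k⟩
  have invariant (T : RatFunc ℂ →ₗ[ℂ] RatFunc ℂ) (hT : ∀ m < d, T (psi q n m) ∈ S) : T f ∈ S :=
    (Submodule.span_le (p := S.comap T)).mpr (by rintro _ ⟨m, rfl⟩; exact hT m m.2) hf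
  refine ⟨invariant ((-I * q⁻¹ / (q - q⁻¹)) • (LinearMap.mulLeft ℂ (X : RatFunc ℂ) ∘ₗ
      (q ^ (n : ℤ) • LinearMap.id - q ^ (-(n : ℤ)) • σ.toLinearMap)))
      fun m hm => S.smul_mem _ (by rw [zpow_neg]; exact (hops m hm).1),
    invariant ((I * q ^ (-(n : ℤ) + 1) / (q - q⁻¹)) • (LinearMap.mulLeft ℂ (X⁻¹ : RatFunc ℂ) ∘ₗ
      (LinearMap.id - σ.toLinearMap))) fun m hm => S.smul_mem _ (hops m hm).2.1,
    invariant (q ^ (-(n : ℤ)) • σ.toLinearMap) fun m hm => S.smul_mem _ (hops m hm).2.2⟩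

/-- For `q = exp(iπP/Q)`, `n ∈ {1,...,Q}`, `d = Q+1−n`, and for the action of
`X`, `Y`, `Z` on the field of rational functions `ℂ(w)` (where `σ : f(w) ↦ f(q⁻²w)` is the
ℂ-algebra endomorphism sending `w` to `q⁻²w`), the ℂ-linear span of `{ψ_0,...,ψ_{d−1}}`
is invariant under `X`, `Y` and `Z`. -/
theorem stmt_12 (Q P : ℕ) (hQodd : Odd Q) (hQpos : 0 < Q)
    (hP1 : 1 ≤ P) (hPQ : P ≤ Q - 1) (hcop : Nat.Coprime P Q)
    (q : ℂ) (hq : q = Complex.exp (↑Real.pi * Complex.I * (P : ℂ) / (Q : ℂ)))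
    (n : ℕ) (hn1 : 1 ≤ n) (hnQ : n ≤ Q) (d : ℕ) (hd : d = Q + 1 - n)
    (σ : RatFunc ℂ →ₐ[ℂ] RatFunc ℂ)
    (hσ : σ RatFunc.X = algebraMap ℂ (RatFunc ℂ) (q ^ (-2 : ℤ)) * RatFunc.X) :
    let Xr : RatFunc ℂ → RatFunc ℂ := fun f =>
      (-Complex.I * q⁻¹ / (q - q⁻¹)) •
        (RatFunc.X * ((q ^ (n : ℤ)) • f - (q ^ (-(n : ℤ))) • σ f))
    let Yr : RatFunc ℂ → RatFunc ℂ := fun f =>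
      (Complex.I * q ^ (-(n : ℤ) + 1) / (q - q⁻¹)) • ((RatFunc.X)⁻¹ * (f - σ f))
    let Zr : RatFunc ℂ → RatFunc ℂ := fun f => (q ^ (-(n : ℤ))) • σ f
    let S : Submodule ℂ (RatFunc ℂ) :=
      Submodule.span ℂ (Set.range fun m : Fin d => psi q n (m : ℕ))
    ∀ f ∈ S, Xr f ∈ S ∧ Yr f ∈ S ∧ Zr f ∈ S :=
  stmt_12_general Q P hQodd q hq n d hd σ hσ
end

section
/- Let Q be an odd positive integer, P ∈ {1,...,Q−1} with gcd(P,Q) = 1, q = exp(iπP/Q), and let n ∈ ℤ. Define c_m = (q^{n−1} + q^{−n+1}) / ((q^{2m+n−1} + q^{−2m−n+1})(q^{2m+n+1} + q^{−2m−n−1})) for integers m ≥ 0. Then for every integer m ≥ 1: (q^{2m+n+3} + q^{−2m−n−3}) c_{m+1} − (q + q⁻¹)(q^{2m+n} + q^{−2m−n}) c_m + (q^{2m+n−3} + q^{−2m−n+3}) c_{m−1} = 0. -/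
/-!
Writing `u k = q ^ k + q ^ (-k)` and `s = 2m + n`, one has `c_m = A / (u (s - 1) * u (s + 1))`
with `A = u (n - 1)`, so the recursion collapses to
`A / u (s + 1) - (q + q⁻¹) u s * A / (u (s - 1) * u (s + 1)) + A / u (s - 1) = 0`,
which is the identity `u (s - 1) + u (s + 1) = (q + q⁻¹) u s`.
The only arithmetic input is `u k ≠ 0`: otherwise `q ^ (2k) = -1`, and raising to the odd
power `Q` contradicts `q ^ (2Q) = 1`.
-/

theorem zpow_add_zpow_neg_ne_zero_of_pow_two_mul_eq_one {K : Type*} [Field K] [NeZero (2 : K)]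
    {q : K} {N : ℕ} (hN : Odd N) (hq : q ^ (2 * N) = 1) (k : ℤ) :
    q ^ k + q ^ (-k) ≠ 0 := by
  have hq0 : q ≠ 0 := by rintro rfl; simp [hN.pos.ne'] at hq
  intro hk
  have hsq : q ^ (2 * k) = -1 := by
    have hinv : q ^ k * q ^ (-k) = 1 := by rw [← zpow_add₀ hq0, add_neg_cancel, zpow_zero]
    rw [two_mul, zpow_add₀ hq0]
    linear_combination q ^ k * hk - hinv
  have : (-1 : K) = 1 := calc
    (-1 : K) = (q ^ (2 * k)) ^ N := by rw [hsq, hN.neg_one_pow]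
    _ = (q ^ (2 * N)) ^ k := by
      rw [← zpow_natCast, ← zpow_natCast, ← zpow_mul, ← zpow_mul]; push_cast; ring_nf
    _ = 1 := by rw [hq, one_zpow]
  exact two_ne_zero (by linear_combination -this : (2 : K) = 0)

theorem Complex.exp_pi_mul_I_mul_div_pow_two_mul (P : ℤ) {Q : ℕ} (hQ : Q ≠ 0) :
    Complex.exp (Real.pi * Complex.I * P / Q) ^ (2 * Q) = 1 := by
  rw [← Complex.exp_nat_mul]
  convert Complex.exp_int_mul_two_pi_mul_I P using 2
  field_simp
  push_cast
  ring

theorem zpow_sub_one_add_zpow_add_one {K : Type*} [Field K] {q : K} (hq : q ≠ 0) (s : ℤ) :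
    (q ^ (s - 1) + q ^ (-s + 1)) + (q ^ (s + 1) + q ^ (-s - 1)) =
      (q + q⁻¹) * (q ^ s + q ^ (-s)) := by
  rw [zpow_sub_one₀ hq, zpow_add_one₀ hq, zpow_add_one₀ hq, zpow_sub_one₀ hq]
  ring

theorem three_term_recursion_of_zpow_add_zpow_neg_ne_zero {K : Type*} [Field K] {q : K}
    (hne : ∀ k : ℤ, q ^ k + q ^ (-k) ≠ 0) (A : K) (s : ℤ) :
    (q ^ (s + 3) + q ^ (-s - 3)) *
          (A / ((q ^ (s + 1) + q ^ (-s - 1)) * (q ^ (s + 3) + q ^ (-s - 3))))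
        - (q + q⁻¹) * (q ^ s + q ^ (-s)) *
          (A / ((q ^ (s - 1) + q ^ (-s + 1)) * (q ^ (s + 1) + q ^ (-s - 1))))
        + (q ^ (s - 3) + q ^ (-s + 3)) *
          (A / ((q ^ (s - 3) + q ^ (-s + 3)) * (q ^ (s - 1) + q ^ (-s + 1)))) = 0 := by
  have hq : q ≠ 0 := by rintro rfl; simpa using hne 1
  have hne' (a b : ℤ) (hab : b = -a) : q ^ a + q ^ b ≠ 0 := hab ▸ hne a
  have h1 := hne' (s + 1) (-s - 1) (by ring)
  have h3 := hne' (s + 3) (-s - 3) (by ring)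
  have hm1 := hne' (s - 1) (-s + 1) (by ring)
  have hm3 := hne' (s - 3) (-s + 3) (by ring)
  rw [← zpow_sub_one_add_zpow_add_one hq s]
  field_simp
  ring

theorem stmt_13_general (Q P : ℕ) (hQodd : Odd Q)
    (q : ℂ) (hq : q = Complex.exp (↑Real.pi * Complex.I * (P : ℂ) / (Q : ℂ)))
    (n : ℤ) :
    let c : ℕ → ℂ := fun m =>
      (q ^ (n - 1) + q ^ (-n + 1)) /
        ((q ^ (2 * (m : ℤ) + n - 1) + q ^ (-(2 * (m : ℤ)) - n + 1)) *
          (q ^ (2 * (m : ℤ) + n + 1) + q ^ (-(2 * (m : ℤ)) - n - 1)))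
    ∀ m : ℕ, 1 ≤ m →
      (q ^ (2 * (m : ℤ) + n + 3) + q ^ (-(2 * (m : ℤ)) - n - 3)) * c (m + 1)
        - (q + q⁻¹) * (q ^ (2 * (m : ℤ) + n) + q ^ (-(2 * (m : ℤ)) - n)) * c m
        + (q ^ (2 * (m : ℤ) + n - 3) + q ^ (-(2 * (m : ℤ)) - n + 3)) * c (m - 1) = 0 := by
  intro c m hm
  have hq2Q : q ^ (2 * Q) = 1 := by
    rw [hq]; exact_mod_cast Complex.exp_pi_mul_I_mul_div_pow_two_mul P hQodd.pos.ne'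
  have hne := zpow_add_zpow_neg_ne_zero_of_pow_two_mul_eq_one hQodd hq2Q
  convert three_term_recursion_of_zpow_add_zpow_neg_ne_zero hne (q ^ (n - 1) + q ^ (-n + 1))
    (2 * m + n) using 4 <;> push_cast [c, hm] <;> ring_nf

/-- For `q = exp(iπP/Q)` and `n ∈ ℤ`, the coefficients
`c_m = (q^{n−1}+q^{−n+1})/((q^{2m+n−1}+q^{−2m−n+1})(q^{2m+n+1}+q^{−2m−n−1}))` satisfy, for
every `m ≥ 1`, the three-term recursion
`(q^{2m+n+3}+q^{−2m−n−3}) c_{m+1} − (q+q⁻¹)(q^{2m+n}+q^{−2m−n}) c_m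
  + (q^{2m+n−3}+q^{−2m−n+3}) c_{m−1} = 0`. -/
theorem stmt_13 (Q P : ℕ) (hQodd : Odd Q) (hQpos : 0 < Q)
    (hP1 : 1 ≤ P) (hPQ : P ≤ Q - 1) (hcop : Nat.Coprime P Q)
    (q : ℂ) (hq : q = Complex.exp (↑Real.pi * Complex.I * (P : ℂ) / (Q : ℂ)))
    (n : ℤ) :
    let c : ℕ → ℂ := fun m =>
      (q ^ (n - 1) + q ^ (-n + 1)) /
        ((q ^ (2 * (m : ℤ) + n - 1) + q ^ (-(2 * (m : ℤ)) - n + 1)) *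
          (q ^ (2 * (m : ℤ) + n + 1) + q ^ (-(2 * (m : ℤ)) - n - 1)))
    ∀ m : ℕ, 1 ≤ m →
      (q ^ (2 * (m : ℤ) + n + 3) + q ^ (-(2 * (m : ℤ)) - n - 3)) * c (m + 1)
        - (q + q⁻¹) * (q ^ (2 * (m : ℤ) + n) + q ^ (-(2 * (m : ℤ)) - n)) * c m
        + (q ^ (2 * (m : ℤ) + n - 3) + q ^ (-(2 * (m : ℤ)) - n + 3)) * c (m - 1) = 0 :=
  stmt_13_general Q P hQodd q hq n
end

section
/- Let Q be an odd positive integer, P ∈ {1,...,Q−1} with gcd(P,Q) = 1, q = exp(iπP/Q), fix n ∈ {1,...,Q} and set d = Q+1−n. With the d×d tridiagonal matrices ρ(X), ρ(Y), ρ(Z) of the representation ρ (entries: ρ(Z)_{m−1,m} = −(q²−q⁻²)q^{2m+n−1}a_m, ρ(Z)_{m+1,m} = (q²−q⁻²)q^{−2m−n−1}a_{m+1}, ρ(Z)_{mm} = (q+q⁻¹)c_m; ρ(X)_{m−1,m} = (q+q⁻¹)a_m, ρ(X)_{m+1,m} = (q+q⁻¹)a_{m+1}, ρ(X)_{mm}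 = d_m; ρ(Y)_{m−1,m} = (q+q⁻¹)q^{2(2m+n−1)}a_m, ρ(Y)_{m+1,m} = (q+q⁻¹)q^{−2(2m+n+1)}a_{m+1}, ρ(Y)_{mm} = −d_m, where a_m² = [m]_{q²}[m+n−1]_{q²}/((q^{2m+n−1}+q^{−2m−n+1})²(q^{2m+n−2}+q^{−2m−n+2})(q^{2m+n}+q^{−2m−n})), c_m = (q^{n−1}+q^{−n+1})/((q^{2m+n−1}+q^{−2m−n+1})(q^{2m+n+1}+q^{−2m−n−1})), d_m = [2m+n]_q c_m), let D be the d×d diagonal matrix with D_{mm} = [2m+n]_q for m = 0,...,d−1. Then q ρ(X) − q⁻¹ ρ(Y) = D ρ(Z). -/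
theorem qnum_mul_sub_inv (q : ℂ) (x : ℤ) : qnum q x * (q - q⁻¹) = q ^ x - q ^ (-x) := by
  rcases eq_or_ne (q - q⁻¹) 0 with h | h
  -- here `[x]_q = 0` by the convention `_ / 0 = 0`, but also `q = q⁻¹`, so `q^x = q^(-x)`
  · have hx : q ^ (-x) = q ^ x := by rw [zpow_neg, ← inv_zpow, ← sub_eq_zero.mp h]
    rw [h, mul_zero, hx, sub_self]
  · exact div_mul_cancel₀ _ h

theorem zpow_two_sub_zpow_neg_two (q : ℂ) :
    q ^ (2 : ℤ) - q ^ (-2 : ℤ) = (q - q⁻¹) * (q + q⁻¹) := by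
  rw [zpow_neg]; simp only [zpow_ofNat]; ring

section
variable {q : ℂ} (hq : q ≠ 0) (x : ℤ)
include hq

theorem qnum_mul_superdiag :
    qnum q x * (-(q ^ (2 : ℤ) - q ^ (-2 : ℤ)) * q ^ (x + 1)) =
      (q + q⁻¹) * (q - q⁻¹ * q ^ (2 * (x + 1))) := by
  rw [zpow_two_sub_zpow_neg_two, neg_mul, mul_neg, ← mul_assoc, ← mul_assoc, qnum_mul_sub_inv,
    mul_comm (2 : ℤ), zpow_mul]
  simp only [zpow_add₀ hq, zpow_neg, zpow_one, zpow_two]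
  field_simp
  ring

theorem qnum_mul_subdiag :
    qnum q x * ((q ^ (2 : ℤ) - q ^ (-2 : ℤ)) * q ^ (-(x - 1))) =
      (q + q⁻¹) * (q - q⁻¹ * q ^ (-(2 * (x - 1)))) := by
  rw [zpow_two_sub_zpow_neg_two, ← mul_assoc, ← mul_assoc, qnum_mul_sub_inv,
    mul_comm (2 : ℤ), ← neg_mul, zpow_mul]
  simp only [zpow_neg, zpow_sub₀ hq, zpow_one, zpow_two]
  field_simp
end

theorem stmt_17_general (q : ℂ) (n : ℕ) (d : ℕ) (a : ℕ → ℂ) :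
    let c : ℕ → ℂ := fun m =>
      (q ^ ((n : ℤ) - 1) + q ^ (-(n : ℤ) + 1)) /
        ((q ^ (2 * (m : ℤ) + n - 1) + q ^ (-(2 * (m : ℤ)) - n + 1)) *
          (q ^ (2 * (m : ℤ) + n + 1) + q ^ (-(2 * (m : ℤ)) - n - 1)))
    let dd : ℕ → ℂ := fun m => qnum q (2 * (m : ℤ) + n) * c m
    let ρZ : Matrix (Fin d) (Fin d) ℂ := Matrix.of fun i j =>
      if (j : ℕ) = (i : ℕ) + 1 then
        -(q ^ (2 : ℤ) - q ^ (-2 : ℤ)) * q ^ (2 * (j : ℤ) + n - 1) * a (j : ℕ)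
      else if (i : ℕ) = (j : ℕ) + 1 then
        (q ^ (2 : ℤ) - q ^ (-2 : ℤ)) * q ^ (-(2 * (j : ℤ)) - n - 1) * a ((j : ℕ) + 1)
      else if i = j then (q + q⁻¹) * c (i : ℕ) else 0
    let ρX : Matrix (Fin d) (Fin d) ℂ := Matrix.of fun i j =>
      if (j : ℕ) = (i : ℕ) + 1 then (q + q⁻¹) * a (j : ℕ)
      else if (i : ℕ) = (j : ℕ) + 1 then (q + q⁻¹) * a ((j : ℕ) + 1)
      else if i = j then dd (i : ℕ) else 0
    let ρY : Matrix (Fin d) (Fin d) ℂ := Matrix.of fun i j =>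
      if (j : ℕ) = (i : ℕ) + 1 then (q + q⁻¹) * q ^ (2 * (2 * (j : ℤ) + n - 1)) * a (j : ℕ)
      else if (i : ℕ) = (j : ℕ) + 1 then
        (q + q⁻¹) * q ^ (-(2 * (2 * (j : ℤ) + n + 1))) * a ((j : ℕ) + 1)
      else if i = j then -dd (i : ℕ) else 0
    let D : Matrix (Fin d) (Fin d) ℂ :=
      Matrix.diagonal fun m : Fin d => qnum q (2 * (m : ℤ) + n)
    q • ρX - q⁻¹ • ρY = D * ρZ := by
  intro c dd ρZ ρX ρY D
  rcases eq_or_ne q 0 with rfl | hq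
  -- at `q = 0` both sides vanish: `0⁻¹ = 0`, and `D = 0` because `[x]_0` divides by `0 - 0⁻¹ = 0`
  · ext i j
    simp [D, qnum]
  ext i j
  simp only [Matrix.sub_apply, Matrix.smul_apply, D, Matrix.diagonal_mul, ρX, ρY, ρZ,
    Matrix.of_apply, smul_eq_mul]
  split_ifs with hsuper hsub hdiag
  · have hx : (2 * (j : ℤ) + n - 1) = (2 * (i : ℤ) + n) + 1 := by omega
    rw [hx]
    linear_combination (-a j) * qnum_mul_superdiag hq (2 * (i : ℤ) + n)
  · have hx : -(2 * (j : ℤ)) - n - 1 = -((2 * (i : ℤ) + n) - 1) := by omega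
    have hx' : -(2 * (2 * (j : ℤ) + n + 1)) = -(2 * ((2 * (i : ℤ) + n) - 1)) := by omega
    rw [hx, hx']
    linear_combination (-a (j + 1)) * qnum_mul_subdiag hq (2 * (i : ℤ) + n)
  · subst hdiag
    simp only [dd]
    ring
  · simp

/-- With the tridiagonal matrices `ρ(X), ρ(Y), ρ(Z)` of the representation `ρ`
and the diagonal matrix `D = diag([n]_q, [n+2]_q, ..., [2(d−1)+n]_q)`, one has
`q ρ(X) − q⁻¹ ρ(Y) = D ρ(Z)` (the matrix form of `ρ((qX − q⁻¹Y)Z⁻¹) = D`). -/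
theorem stmt_17 (Q P : ℕ) (hQodd : Odd Q) (hQpos : 0 < Q)
    (hP1 : 1 ≤ P) (hPQ : P ≤ Q - 1) (hcop : Nat.Coprime P Q)
    (q : ℂ) (hq : q = Complex.exp (↑Real.pi * Complex.I * (P : ℂ) / (Q : ℂ)))
    (n : ℕ) (hn1 : 1 ≤ n) (hnQ : n ≤ Q) (d : ℕ) (hd : d = Q + 1 - n)
    (a : ℕ → ℂ)
    (ha : ∀ m : ℕ, 1 ≤ m → m ≤ d - 1 →
      a m ^ 2 = qnum (q ^ 2) (m : ℤ) * qnum (q ^ 2) ((m : ℤ) + (n : ℤ) - 1) /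
        ((q ^ (2 * (m : ℤ) + n - 1) + q ^ (-(2 * (m : ℤ)) - n + 1)) ^ 2 *
          ((q ^ (2 * (m : ℤ) + n - 2) + q ^ (-(2 * (m : ℤ)) - n + 2)) *
            (q ^ (2 * (m : ℤ) + n) + q ^ (-(2 * (m : ℤ)) - n))))) :
    let c : ℕ → ℂ := fun m =>
      (q ^ ((n : ℤ) - 1) + q ^ (-(n : ℤ) + 1)) /
        ((q ^ (2 * (m : ℤ) + n - 1) + q ^ (-(2 * (m : ℤ)) - n + 1)) *
          (q ^ (2 * (m : ℤ) + n + 1) + q ^ (-(2 * (m : ℤ)) - n - 1)))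
    let dd : ℕ → ℂ := fun m => qnum q (2 * (m : ℤ) + n) * c m
    let ρZ : Matrix (Fin d) (Fin d) ℂ := Matrix.of fun i j =>
      if (j : ℕ) = (i : ℕ) + 1 then
        -(q ^ (2 : ℤ) - q ^ (-2 : ℤ)) * q ^ (2 * (j : ℤ) + n - 1) * a (j : ℕ)
      else if (i : ℕ) = (j : ℕ) + 1 then
        (q ^ (2 : ℤ) - q ^ (-2 : ℤ)) * q ^ (-(2 * (j : ℤ)) - n - 1) * a ((j : ℕ) + 1)
      else if i = j then (q + q⁻¹) * c (i : ℕ) else 0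
    let ρX : Matrix (Fin d) (Fin d) ℂ := Matrix.of fun i j =>
      if (j : ℕ) = (i : ℕ) + 1 then (q + q⁻¹) * a (j : ℕ)
      else if (i : ℕ) = (j : ℕ) + 1 then (q + q⁻¹) * a ((j : ℕ) + 1)
      else if i = j then dd (i : ℕ) else 0
    let ρY : Matrix (Fin d) (Fin d) ℂ := Matrix.of fun i j =>
      if (j : ℕ) = (i : ℕ) + 1 then (q + q⁻¹) * q ^ (2 * (2 * (j : ℤ) + n - 1)) * a (j : ℕ)
      else if (i : ℕ) = (j : ℕ) + 1 then
        (q + q⁻¹) * q ^ (-(2 * (2 * (j : ℤ) + n + 1))) * a ((j : ℕ) + 1)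
      else if i = j then -dd (i : ℕ) else 0
    let D : Matrix (Fin d) (Fin d) ℂ :=
      Matrix.diagonal fun m : Fin d => qnum q (2 * (m : ℤ) + n)
    q • ρX - q⁻¹ • ρY = D * ρZ :=
  stmt_17_general q n d a
end

section
/- Let Q be an odd positive integer, P ∈ {1,...,Q−1} with gcd(P,Q) = 1, q = exp(iπP/Q), fix n ∈ {1,...,Q} and set d = Q+1−n. For m = 1,...,d−1, define r_m = [m]_{q²}[m+n−1]_{q²} / ((q^{2m+n−2} + q^{−2m−n+2})(q^{2m+n} + q^{−2m−n})). Then each r_m is a nonzero real number. -/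
/-!
`q² = exp(2πiP/Q)` is a primitive `Q`-th root of unity with `Q` odd. Hence
`q^{2x} − q^{−2x}` vanishes only when `Q ∣ x` (which the range of `m` excludes for both
`m` and `m + n − 1`), and `q^a + q^{−a} = 0` would force `(q²)^a = −1`, impossible for an
element of odd order. Since `|q| = 1`, conjugation inverts `q`, and every factor of `r_m`
is fixed by it.
-/

open ComplexConjugate

section RootsOfUnity

variable {K : Type*} [Field K]

theorem zpow_ne_neg_one_of_pow_eq_one [NeZero (2 : K)] {ζ : K} {k : ℕ}
    (hζ : ζ ^ k = 1) (hk : Odd k) (a : ℤ) : ζ ^ a ≠ -1 := by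
  intro h
  have hpow : (ζ ^ a) ^ k = 1 := by
    rw [← zpow_natCast, ← zpow_mul, mul_comm, zpow_mul, zpow_natCast, hζ, one_zpow]
  rw [h, hk.neg_one_pow] at hpow
  exact two_ne_zero (α := K) (by linear_combination -hpow)

theorem zpow_add_zpow_neg_ne_zero [NeZero (2 : K)] {q : K} {k : ℕ}
    (hq : (q ^ 2) ^ k = 1) (hk : Odd k) (a : ℤ) : q ^ a + q ^ (-a) ≠ 0 := by
  have hq0 : q ≠ 0 := by
    rintro rfl
    simp [hk.pos.ne'] at hq
  intro h
  have hsq : (q ^ 2) ^ a + 1 = 0 := by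
    calc (q ^ 2) ^ a + 1 = q ^ a * (q ^ a + q ^ (-a)) := by
          rw [mul_add, ← zpow_add₀ hq0, ← zpow_add₀ hq0, add_neg_cancel, zpow_zero,
            ← zpow_natCast, ← zpow_mul, Nat.cast_ofNat, two_mul]
      _ = 0 := by rw [h, mul_zero]
  exact zpow_ne_neg_one_of_pow_eq_one hq hk a (eq_neg_of_add_eq_zero_left hsq)

theorem IsPrimitiveRoot.zpow_sub_zpow_neg_ne_zero {ζ : K} {k : ℕ} (hζ : IsPrimitiveRoot ζ k)
    (hk : Odd k) {x : ℤ} (hx : ¬ (k : ℤ) ∣ x) : ζ ^ x - ζ ^ (-x) ≠ 0 := by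
  have hζ0 : ζ ≠ 0 := hζ.ne_zero (by rintro rfl; simp at hk)
  intro h
  have hsq : ζ ^ (2 * x) = 1 := by
    calc ζ ^ (2 * x) = ζ ^ x * ζ ^ x := by rw [two_mul, zpow_add₀ hζ0]
      _ = ζ ^ x * ζ ^ (-x) := congrArg (ζ ^ x * ·) (sub_eq_zero.mp h)
      _ = 1 := by rw [← zpow_add₀ hζ0, add_neg_cancel, zpow_zero]
  have hcop : IsCoprime (k : ℤ) 2 := Nat.isCoprime_iff_coprime.mpr (Nat.coprime_two_right.mpr hk)
  exact hx (hcop.dvd_of_dvd_mul_left ((hζ.zpow_eq_one_iff_dvd _).mp hsq))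

end RootsOfUnity

theorem qnum_ne_zero_s18 {ζ : ℂ} {k : ℕ} (hζ : IsPrimitiveRoot ζ k) (hk : Odd k) {x : ℤ}
    (hx : ¬ (k : ℤ) ∣ x) : qnum ζ x ≠ 0 := by
  have h1 : ¬ (k : ℤ) ∣ 1 := fun h => hx (h.trans (one_dvd x))
  have hden := hζ.zpow_sub_zpow_neg_ne_zero hk h1
  rw [zpow_one, zpow_neg_one] at hden
  exact div_ne_zero (hζ.zpow_sub_zpow_neg_ne_zero hk hx) hden

theorem conj_zpow_of_norm_eq_one {q : ℂ} (hq : ‖q‖ = 1) (a : ℤ) : conj (q ^ a) = q ^ (-a) := by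
  rw [map_zpow₀, ← Complex.inv_eq_conj hq, zpow_neg, inv_zpow]

theorem conj_zpow_add_zpow_neg {q : ℂ} (hq : ‖q‖ = 1) (a : ℤ) :
    conj (q ^ a + q ^ (-a)) = q ^ a + q ^ (-a) := by
  rw [map_add, conj_zpow_of_norm_eq_one hq, conj_zpow_of_norm_eq_one hq, neg_neg, add_comm]

theorem conj_qnum {q : ℂ} (hq : ‖q‖ = 1) (x : ℤ) : conj (qnum q x) = qnum q x := by
  rw [qnum, map_div₀, map_sub, map_sub, conj_zpow_of_norm_eq_one hq, conj_zpow_of_norm_eq_one hq,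
    map_inv₀, ← Complex.inv_eq_conj hq, inv_inv, neg_neg, ← neg_sub, ← neg_sub q, neg_div_neg_eq]

theorem stmt_18_general (Q P : ℕ) (hQodd : Odd Q)
    (hcop : Nat.Coprime P Q)
    (q : ℂ) (hq : q = Complex.exp (↑Real.pi * Complex.I * (P : ℂ) / (Q : ℂ)))
    (n : ℕ) (hn1 : 1 ≤ n) (d : ℕ) (hd : d = Q + 1 - n) :
    let r : ℕ → ℂ := fun m =>
      qnum (q ^ 2) (m : ℤ) * qnum (q ^ 2) ((m : ℤ) + (n : ℤ) - 1) /
        ((q ^ (2 * (m : ℤ) + n - 2) + q ^ (-(2 * (m : ℤ)) - n + 2)) *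
          (q ^ (2 * (m : ℤ) + n) + q ^ (-(2 * (m : ℤ)) - n)))
    ∀ m : ℕ, 1 ≤ m → m ≤ d - 1 → r m ≠ 0 ∧ (r m).im = 0 := by
  intro r m hm1 hm2
  have hζ : IsPrimitiveRoot (q ^ 2) Q := by
    rw [hq, ← Complex.exp_nat_mul]
    convert Complex.isPrimitiveRoot_exp_of_coprime P Q hQodd.pos.ne' hcop using 2
    push_cast
    ring
  have hnorm : ‖q‖ = 1 := by
    rw [hq, show ↑Real.pi * Complex.I * (P : ℂ) / (Q : ℂ) = ↑(Real.pi * P / Q) * Complex.I by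
      push_cast; ring]
    exact Complex.norm_exp_ofReal_mul_I _
  have hm : ¬ (Q : ℤ) ∣ m := fun h => by
    have := Int.le_of_dvd (by omega) h
    omega
  have hmn : ¬ (Q : ℤ) ∣ (m + n - 1) := fun h => by
    have := Int.le_of_dvd (by omega) h
    omega
  have hden₁ : -(2 * (m : ℤ)) - n + 2 = -(2 * m + n - 2) := by ring
  have hden₂ : -(2 * (m : ℤ)) - n = -(2 * m + n) := by ring
  dsimp only [r]
  rw [hden₁, hden₂]
  constructor
  · exact div_ne_zero (mul_ne_zero (qnum_ne_zero_s18 hζ hQodd hm) (qnum_ne_zero_s18 hζ hQodd hmn))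
      (mul_ne_zero (zpow_add_zpow_neg_ne_zero hζ.pow_eq_one hQodd _)
        (zpow_add_zpow_neg_ne_zero hζ.pow_eq_one hQodd _))
  · have hnorm₂ : ‖q ^ 2‖ = 1 := by rw [norm_pow, hnorm, one_pow]
    rw [← Complex.conj_eq_iff_im, map_div₀, map_mul, map_mul, conj_qnum hnorm₂, conj_qnum hnorm₂,
      conj_zpow_add_zpow_neg hnorm, conj_zpow_add_zpow_neg hnorm]

/-- For `q = exp(iπP/Q)`, `n ∈ {1,...,Q}`, `d = Q+1−n`, and `m ∈ {1,...,d−1}`,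
the quantity `r_m = [m]_{q²}[m+n−1]_{q²}/((q^{2m+n−2}+q^{−2m−n+2})(q^{2m+n}+q^{−2m−n}))`
is a nonzero real number. -/
theorem stmt_18 (Q P : ℕ) (hQodd : Odd Q) (hQpos : 0 < Q)
    (hP1 : 1 ≤ P) (hPQ : P ≤ Q - 1) (hcop : Nat.Coprime P Q)
    (q : ℂ) (hq : q = Complex.exp (↑Real.pi * Complex.I * (P : ℂ) / (Q : ℂ)))
    (n : ℕ) (hn1 : 1 ≤ n) (hnQ : n ≤ Q) (d : ℕ) (hd : d = Q + 1 - n) :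
    let r : ℕ → ℂ := fun m =>
      qnum (q ^ 2) (m : ℤ) * qnum (q ^ 2) ((m : ℤ) + (n : ℤ) - 1) /
        ((q ^ (2 * (m : ℤ) + n - 2) + q ^ (-(2 * (m : ℤ)) - n + 2)) *
          (q ^ (2 * (m : ℤ) + n) + q ^ (-(2 * (m : ℤ)) - n)))
    ∀ m : ℕ, 1 ≤ m → m ≤ d - 1 → r m ≠ 0 ∧ (r m).im = 0 :=
  stmt_18_general Q P hQodd hcop q hq n hn1 d hd
end

section
/- Let Q be an odd positive integer, P ∈ {1,...,Q−1} with gcd(P,Q) = 1, q = exp(iπP/Q), fix n ∈ {1,...,Q} and set d = Q+1−n. For m = 1,...,d−1 set r_m = [m]_{q²}[m+n−1]_{q²}/((q^{2m+n−2}+q^{−2m−n+2})(q^{2m+n}+q^{−2m−n})) (a nonzero real number), and define a_m = b_m = (q^{2m+n−1}+q^{−2m−n+1})⁻¹ · √r_m, where √r_m denotes the nonnegative real square root if r_m > 0 and i·√|r_m| if r_m < 0. Set c_m = (q^{n−1}+q^{−n+1})/((q^{2m+n−1}+q^{−2m−n+1})(q^{2m+n+1}+q^{−2m−n−1})), d_m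 = [2m+n]_q c_m, and let ρ(X), ρ(Y), ρ(Z) be the d×d tridiagonal matrices with entries ρ(Z)_{m−1,m} = −(q²−q⁻²)q^{2m+n−1}a_m, ρ(Z)_{m+1,m} = (q²−q⁻²)q^{−2m−n−1}b_{m+1}, ρ(Z)_{mm} = (q+q⁻¹)c_m; ρ(X)_{m−1,m} = (q+q⁻¹)a_m, ρ(X)_{m+1,m} = (q+q⁻¹)b_{m+1}, ρ(X)_{mm} = d_m; ρ(Y)_{m−1,m} = (q+q⁻¹)q^{2(2m+n−1)}a_m, ρ(Y)_{m+1,m} = (q+q⁻¹)q^{−2(2m+n+1)}b_{m+1}, ρ(Y)_{mm} = −d_m. Let T = diag(τ_0,...,τ_{d−1}) with τ_0 = 1 and τ_m = τ_{m−1}·sgn(r_m). Then T ρ(X) T = ρ(X)*, T ρ(Y) T = ρ(Y)*, and T ρ(Z) T = ρ(Z)*, where * denotes the conjugate transpose; moreover T² = 1. -/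
open Matrix

/-- The square root of a (real) complex number `z`: the nonnegative real square root if
`z > 0`, and `i·√|z|` if `z < 0`. -/
noncomputable def sqrtSgn (z : ℂ) : ℂ :=
  if 0 < z.re then ((Real.sqrt z.re : ℝ) : ℂ) else Complex.I * ((Real.sqrt |z.re| : ℝ) : ℂ)

/-- `r_m = [m]_{q²}[m+n−1]_{q²}/((q^{2m+n−2}+q^{−2m−n+2})(q^{2m+n}+q^{−2m−n}))`. -/
noncomputable def rcoef (q : ℂ) (n : ℤ) (m : ℕ) : ℂ :=
  qnum (q ^ 2) (m : ℤ) * qnum (q ^ 2) ((m : ℤ) + n - 1) /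
    ((q ^ (2 * (m : ℤ) + n - 2) + q ^ (-(2 * (m : ℤ)) - n + 2)) *
      (q ^ (2 * (m : ℤ) + n) + q ^ (-(2 * (m : ℤ)) - n)))

/-- `a_m = b_m = (q^{2m+n−1}+q^{−2m−n+1})⁻¹ √r_m`. -/
noncomputable def acoef (q : ℂ) (n : ℤ) (m : ℕ) : ℂ :=
  (q ^ (2 * (m : ℤ) + n - 1) + q ^ (-(2 * (m : ℤ)) - n + 1))⁻¹ * sqrtSgn (rcoef q n m)

/-- `c_m = (q^{n−1}+q^{−n+1})/((q^{2m+n−1}+q^{−2m−n+1})(q^{2m+n+1}+q^{−2m−n−1}))`. -/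
noncomputable def ccoef (q : ℂ) (n : ℤ) (m : ℕ) : ℂ :=
  (q ^ (n - 1) + q ^ (-n + 1)) /
    ((q ^ (2 * (m : ℤ) + n - 1) + q ^ (-(2 * (m : ℤ)) - n + 1)) *
      (q ^ (2 * (m : ℤ) + n + 1) + q ^ (-(2 * (m : ℤ)) - n - 1)))

/-- `d_m = [2m+n]_q c_m`. -/
noncomputable def dcoef (q : ℂ) (n : ℤ) (m : ℕ) : ℂ :=
  qnum q (2 * (m : ℤ) + n) * ccoef q n m

/-! Since `|q| = 1`, complex conjugation inverts `q`, so the `q`-numbers and the coefficients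
`c_m`, `d_m` are real, while `conj a_m = sgn(r_m) a_m` because `√r_m` is real or purely imaginary
according to the sign of `r_m`. Conjugating a tridiagonal matrix by the `±1`-diagonal `T` multiplies
its entries at `(m - 1, m)` and `(m, m - 1)` by `τ_{m-1} τ_m = sgn(r_m)`, which is exactly what
conjugate transposition does to `ρ(X)`, `ρ(Y)`, `ρ(Z)`. -/

open ComplexConjugate

section UnitModulus

variable {u : ℂ}

lemma conj_zpow_of_conj_eq_inv (hu : conj u = u⁻¹) (k : ℤ) : conj (u ^ k) = u ^ (-k) := by
  rw [map_zpow₀, hu, _root_.inv_zpow']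

lemma conj_qnum_of_conj_eq_inv (hu : conj u = u⁻¹) (x : ℤ) : conj (qnum u x) = qnum u x := by
  simp only [qnum, map_div₀, map_sub, map_inv₀, conj_zpow_of_conj_eq_inv hu, hu, inv_inv, neg_neg]
  rw [← neg_sub, ← neg_sub u, neg_div_neg_eq]

end UnitModulus

lemma conj_sqrtSgn (z : ℂ) : conj (sqrtSgn z) = (if 0 < z.re then 1 else -1) * sqrtSgn z := by
  unfold sqrtSgn
  split_ifs <;> simp

section Coefficients

variable {q : ℂ} (hq : conj q = q⁻¹) (n : ℤ) (m : ℕ)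
include hq

lemma conj_acoef :
    conj (acoef q n m) = (if 0 < (rcoef q n m).re then 1 else -1) * acoef q n m := by
  simp only [acoef, map_mul, map_inv₀, map_add, conj_zpow_of_conj_eq_inv hq, conj_sqrtSgn]
  ring_nf

lemma conj_ccoef : conj (ccoef q n m) = ccoef q n m := by
  simp only [ccoef, map_div₀, map_mul, map_add, conj_zpow_of_conj_eq_inv hq]
  ring_nf

lemma conj_dcoef : conj (dcoef q n m) = dcoef q n m := by
  rw [dcoef, map_mul, conj_qnum_of_conj_eq_inv hq, conj_ccoef hq]

end Coefficients

lemma conj_eq_inv_of_eq_exp_mul_I {q : ℂ} {θ : ℝ} (hq : q = Complex.exp (θ * Complex.I)) :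
    conj q = q⁻¹ := by
  rw [Complex.inv_eq_conj (hq ▸ Complex.norm_exp_ofReal_mul_I θ)]

section SignSequence

variable {R : Type*} [Ring R] {N : ℕ} {τ ε : ℕ → R}

lemma eq_one_or_eq_neg_one_of_eq_prev_mul (hε : ∀ m, ε m = 1 ∨ ε m = -1) (h0 : τ 0 = 1)
    (hτ : ∀ m, 1 ≤ m → m ≤ N → τ m = τ (m - 1) * ε m) : ∀ m ≤ N, τ m = 1 ∨ τ m = -1
  | 0, _ => .inl h0
  | m + 1, hm => by
    rw [hτ (m + 1) (by omega) hm, Nat.add_sub_cancel]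
    rcases eq_one_or_eq_neg_one_of_eq_prev_mul hε h0 hτ m (by omega) with h | h <;>
      rcases hε (m + 1) with h' | h' <;> simp [h, h']

lemma mul_succ_eq_of_eq_prev_mul (hε : ∀ m, ε m = 1 ∨ ε m = -1) (h0 : τ 0 = 1)
    (hτ : ∀ m, 1 ≤ m → m ≤ N → τ m = τ (m - 1) * ε m) {m : ℕ} (hm : m + 1 ≤ N) :
    τ m * τ (m + 1) = ε (m + 1) := by
  rw [hτ (m + 1) (by omega) hm, Nat.add_sub_cancel, ← mul_assoc]
  rcases eq_one_or_eq_neg_one_of_eq_prev_mul hε h0 hτ m (by omega) with h | h <;> simp [h]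

end SignSequence

lemma diagonal_mul_self_of_eq_one_or_eq_neg_one {R : Type*} [Ring R] {d : ℕ} {τ : ℕ → R}
    (hτ : ∀ m < d, τ m = 1 ∨ τ m = -1) :
    diagonal (fun i : Fin d => τ i) * diagonal (fun i : Fin d => τ i) = 1 := by
  rw [diagonal_mul_diagonal, ← diagonal_one]
  congr 1
  funext i
  rcases hτ i i.isLt with h | h <;> simp [h]

section Tridiagonal

variable {R : Type*} [CommRing R] [StarRing R] {d : ℕ}

def tridiag (d : ℕ) (sup sub diag : ℕ → R) : Matrix (Fin d) (Fin d) R :=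
  Matrix.of fun i j =>
    if (j : ℕ) = (i : ℕ) + 1 then sup j
    else if (i : ℕ) = (j : ℕ) + 1 then sub j
    else if i = j then diag i else 0

lemma diagonal_mul_tridiag_mul_diagonal {τ : ℕ → R} (hτ : ∀ m < d, τ m = 1 ∨ τ m = -1)
    {sup sub diag : ℕ → R}
    (hsub : ∀ m, m + 1 < d → star (sub m) = τ m * τ (m + 1) * sup (m + 1))
    (hdiag : ∀ m < d, star (diag m) = diag m) :
    diagonal (fun i : Fin d => τ i) * tridiag d sup sub diag * diagonal (fun i : Fin d => τ i) =
      (tridiag d sup sub diag)ᴴ := by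
  ext i j
  simp only [tridiag, mul_diagonal, diagonal_mul, conjTranspose_apply, of_apply]
  have hi := i.isLt
  have hj := j.isLt
  by_cases hji : (j : ℕ) = i + 1
  · rw [if_pos hji, if_neg (by omega), if_pos hji, hji, hsub i (by omega)]
    ring
  by_cases hij : (i : ℕ) = j + 1
  · rw [if_neg hji, if_pos hij, if_pos hij, hij]
    have := congrArg star (hsub j (by omega))
    rw [star_star, star_mul, star_mul] at this
    rw [this]
    rcases hτ j hj with h | h <;> rcases hτ (j + 1) (by omega) with h' | h' <;> simp [h, h']
  rw [if_neg hji, if_neg hij, if_neg hij, if_neg hji]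
  by_cases hij' : i = j
  · subst hij'
    rw [if_pos rfl, hdiag i hi]
    rcases hτ i hi with h | h <;> simp [h]
  · rw [if_neg hij', if_neg (Ne.symm hij'), star_zero, mul_zero, zero_mul]

end Tridiagonal

theorem stmt_19_general (Q P : ℕ)
    (q : ℂ) (hq : q = Complex.exp (↑Real.pi * Complex.I * (P : ℂ) / (Q : ℂ)))
    (n : ℕ) (d : ℕ)
    (τ : ℕ → ℂ) (hτ0 : τ 0 = 1)
    (hτ : ∀ m : ℕ, 1 ≤ m → m ≤ d - 1 →
      τ m = τ (m - 1) * (if 0 < (rcoef q (n : ℤ) m).re then 1 else -1)) :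
    let ρZ : Matrix (Fin d) (Fin d) ℂ := Matrix.of fun i j =>
      if (j : ℕ) = (i : ℕ) + 1 then
        -(q ^ (2 : ℤ) - q ^ (-2 : ℤ)) * q ^ (2 * (j : ℤ) + n - 1) * acoef q (n : ℤ) (j : ℕ)
      else if (i : ℕ) = (j : ℕ) + 1 then
        (q ^ (2 : ℤ) - q ^ (-2 : ℤ)) * q ^ (-(2 * (j : ℤ)) - n - 1) * acoef q (n : ℤ) ((j : ℕ) + 1)
      else if i = j then (q + q⁻¹) * ccoef q (n : ℤ) (i : ℕ) else 0
    let ρX : Matrix (Fin d) (Fin d) ℂ := Matrix.of fun i j =>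
      if (j : ℕ) = (i : ℕ) + 1 then (q + q⁻¹) * acoef q (n : ℤ) (j : ℕ)
      else if (i : ℕ) = (j : ℕ) + 1 then (q + q⁻¹) * acoef q (n : ℤ) ((j : ℕ) + 1)
      else if i = j then dcoef q (n : ℤ) (i : ℕ) else 0
    let ρY : Matrix (Fin d) (Fin d) ℂ := Matrix.of fun i j =>
      if (j : ℕ) = (i : ℕ) + 1 then
        (q + q⁻¹) * q ^ (2 * (2 * (j : ℤ) + n - 1)) * acoef q (n : ℤ) (j : ℕ)
      else if (i : ℕ) = (j : ℕ) + 1 then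
        (q + q⁻¹) * q ^ (-(2 * (2 * (j : ℤ) + n + 1))) * acoef q (n : ℤ) ((j : ℕ) + 1)
      else if i = j then -dcoef q (n : ℤ) (i : ℕ) else 0
    let T : Matrix (Fin d) (Fin d) ℂ := Matrix.diagonal fun m : Fin d => τ (m : ℕ)
    T * ρX * T = ρXᴴ ∧ T * ρY * T = ρYᴴ ∧ T * ρZ * T = ρZᴴ ∧ T * T = 1 := by
  intro ρZ ρX ρY T
  have hq' : conj q = q⁻¹ := conj_eq_inv_of_eq_exp_mul_I (θ := Real.pi * P / Q) (by
    rw [hq]; push_cast; ring_nf)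
  have hε : ∀ m : ℕ, (if 0 < (rcoef q n m).re then (1 : ℂ) else -1) = 1 ∨
      (if 0 < (rcoef q n m).re then (1 : ℂ) else -1) = -1 := fun m => by
    split_ifs <;> simp
  have hsign : ∀ m < d, τ m = 1 ∨ τ m = -1 := fun m hm =>
    eq_one_or_eq_neg_one_of_eq_prev_mul hε hτ0 hτ m (by omega)
  have hstep (m : ℕ) (hm : m + 1 < d) :=
    mul_succ_eq_of_eq_prev_mul hε hτ0 hτ (m := m) (by omega)
  refine ⟨diagonal_mul_tridiag_mul_diagonal (sup := fun j => (q + q⁻¹) * acoef q n j)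
      (sub := fun j => (q + q⁻¹) * acoef q n (j + 1)) (diag := fun j => dcoef q n j)
      hsign (fun m hm => ?_) (fun m _ => conj_dcoef hq' n m),
    diagonal_mul_tridiag_mul_diagonal
      (sup := fun j => (q + q⁻¹) * q ^ (2 * (2 * (j : ℤ) + n - 1)) * acoef q n j)
      (sub := fun j => (q + q⁻¹) * q ^ (-(2 * (2 * (j : ℤ) + n + 1))) * acoef q n (j + 1))
      (diag := fun j => -dcoef q n j) hsign (fun m hm => ?_)
      (fun m _ => by rw [star_neg, Complex.star_def, conj_dcoef hq']),
    diagonal_mul_tridiag_mul_diagonal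
      (sup := fun j => -(q ^ (2 : ℤ) - q ^ (-2 : ℤ)) * q ^ (2 * (j : ℤ) + n - 1) * acoef q n j)
      (sub := fun j =>
        (q ^ (2 : ℤ) - q ^ (-2 : ℤ)) * q ^ (-(2 * (j : ℤ)) - n - 1) * acoef q n (j + 1))
      (diag := fun j => (q + q⁻¹) * ccoef q n j) hsign (fun m hm => ?_)
      (fun m _ => by
        simp only [Complex.star_def, map_mul, map_add, map_inv₀, hq', inv_inv, conj_ccoef hq',
          add_comm]),
    diagonal_mul_self_of_eq_one_or_eq_neg_one hsign⟩
  all_goals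
    rw [hstep m hm]
    simp only [Complex.star_def, map_mul, map_sub, map_add, map_inv₀, hq', inv_inv,
      conj_zpow_of_conj_eq_inv hq', conj_acoef hq']
    push_cast
    ring_nf

/-- For `q = exp(iπP/Q)`, `n ∈ {1,...,Q}`, `d = Q+1−n`, the tridiagonal matrices
`ρ(X), ρ(Y), ρ(Z)` together with the diagonal sign matrix `T = diag(τ_0,...,τ_{d−1})`
(`τ_0 = 1`, `τ_m = τ_{m−1}·sgn(r_m)`) satisfy `T ρ(X) T = ρ(X)*`, `T ρ(Y) T = ρ(Y)*`,
`T ρ(Z) T = ρ(Z)*` (conjugate transpose), and `T² = 1`. -/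
theorem stmt_19 (Q P : ℕ) (hQodd : Odd Q) (hQpos : 0 < Q)
    (hP1 : 1 ≤ P) (hPQ : P ≤ Q - 1) (hcop : Nat.Coprime P Q)
    (q : ℂ) (hq : q = Complex.exp (↑Real.pi * Complex.I * (P : ℂ) / (Q : ℂ)))
    (n : ℕ) (hn1 : 1 ≤ n) (hnQ : n ≤ Q) (d : ℕ) (hd : d = Q + 1 - n)
    (τ : ℕ → ℂ) (hτ0 : τ 0 = 1)
    (hτ : ∀ m : ℕ, 1 ≤ m → m ≤ d - 1 →
      τ m = τ (m - 1) * (if 0 < (rcoef q (n : ℤ) m).re then 1 else -1)) :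
    let ρZ : Matrix (Fin d) (Fin d) ℂ := Matrix.of fun i j =>
      if (j : ℕ) = (i : ℕ) + 1 then
        -(q ^ (2 : ℤ) - q ^ (-2 : ℤ)) * q ^ (2 * (j : ℤ) + n - 1) * acoef q (n : ℤ) (j : ℕ)
      else if (i : ℕ) = (j : ℕ) + 1 then
        (q ^ (2 : ℤ) - q ^ (-2 : ℤ)) * q ^ (-(2 * (j : ℤ)) - n - 1) * acoef q (n : ℤ) ((j : ℕ) + 1)
      else if i = j then (q + q⁻¹) * ccoef q (n : ℤ) (i : ℕ) else 0
    let ρX : Matrix (Fin d) (Fin d) ℂ := Matrix.of fun i j =>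
      if (j : ℕ) = (i : ℕ) + 1 then (q + q⁻¹) * acoef q (n : ℤ) (j : ℕ)
      else if (i : ℕ) = (j : ℕ) + 1 then (q + q⁻¹) * acoef q (n : ℤ) ((j : ℕ) + 1)
      else if i = j then dcoef q (n : ℤ) (i : ℕ) else 0
    let ρY : Matrix (Fin d) (Fin d) ℂ := Matrix.of fun i j =>
      if (j : ℕ) = (i : ℕ) + 1 then
        (q + q⁻¹) * q ^ (2 * (2 * (j : ℤ) + n - 1)) * acoef q (n : ℤ) (j : ℕ)
      else if (i : ℕ) = (j : ℕ) + 1 then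
        (q + q⁻¹) * q ^ (-(2 * (2 * (j : ℤ) + n + 1))) * acoef q (n : ℤ) ((j : ℕ) + 1)
      else if i = j then -dcoef q (n : ℤ) (i : ℕ) else 0
    let T : Matrix (Fin d) (Fin d) ℂ := Matrix.diagonal fun m : Fin d => τ (m : ℕ)
    T * ρX * T = ρXᴴ ∧ T * ρY * T = ρYᴴ ∧ T * ρZ * T = ρZᴴ ∧ T * T = 1 :=
  stmt_19_general Q P q hq n d τ hτ0 hτ
end
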